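/- arXiv:1807.10604 — 8 statements merged into one kernel-verified Lean document; each statement's English description precedes it below -/
import Mathlib

section
/- Let N ≥ 2 and 1 ≤ m ≤ N be integers, and let z_1, …, z_N be (not necessarily distinct) complex numbers. Then the sum, over all m-element subsets S of {1, …, N}, of |∑_{i∈S} z_i|² equals C(N,m) · (m/(N(N−1))) · ( (N−m)·∑_{i=1}^N |z_i|² + (m−1)·|∑_{i=1}^N z_i|² ). Equivalently, the second moment of |X(m,Φ_N)| is (m/(N(N−1)))·((N−m)∑|z_i|² + (m−1)|∑ z_i|²). -/
lemma cnt {α : Type*} [DecidableEq α] (s t : Finset α) (ht : t ⊆ s) (m : ℕ)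
    (hm : t.card ≤ m) :
    (Finset.filter (fun S => t ⊆ S) (Finset.powersetCard m s)).card
      = (s.card - t.card).choose (m - t.card) := by
  rw [← Finset.card_sdiff_of_subset ht, ← Finset.card_powersetCard]
  apply Finset.card_bij (fun S _ => S \ t)
  · intro S hS
    simp only [Finset.mem_filter, Finset.mem_powersetCard] at hS ⊢
    obtain ⟨⟨hSs, hScard⟩, htS⟩ := hS
    exact ⟨Finset.sdiff_subset_sdiff hSs Finset.Subset.rfl,
      by rw [Finset.card_sdiff_of_subset htS, hScard]⟩
  · intro S₁ h₁ S₂ h₂ h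
    simp only [Finset.mem_filter, Finset.mem_powersetCard] at h₁ h₂
    rw [← Finset.sdiff_union_of_subset h₁.2, ← Finset.sdiff_union_of_subset h₂.2, h]
  · intro U hU
    simp only [Finset.mem_powersetCard] at hU
    obtain ⟨hUs, hUcard⟩ := hU
    have hdisj : Disjoint U t := Finset.disjoint_of_subset_left hUs Finset.sdiff_disjoint
    refine ⟨U ∪ t, ?_, ?_⟩
    · simp only [Finset.mem_filter, Finset.mem_powersetCard]
      refine ⟨⟨Finset.union_subset (hUs.trans (Finset.sdiff_subset)) ht, ?_⟩,
        Finset.subset_union_right⟩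
      rw [Finset.card_union_of_disjoint hdisj, hUcard]
      have := Finset.card_le_card ht
      omega
    · rw [Finset.union_sdiff_right, Finset.sdiff_eq_self_iff_disjoint.2 hdisj]

lemma cnt0 {α : Type*} [DecidableEq α] (s t : Finset α) (m : ℕ) (hm : m < t.card) :
    (Finset.filter (fun S => t ⊆ S) (Finset.powersetCard m s)).card = 0 := by
  rw [Finset.card_eq_zero, Finset.filter_eq_empty_iff]
  intro S hS hts
  have := Finset.card_le_card hts
  simp only [Finset.mem_powersetCard] at hS
  omega

theorem stmt_1 (N m : ℕ) (hN : 2 ≤ N) (hm : 1 ≤ m) (hmN : m ≤ N) (z : Fin N → ℂ) :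
    ∑ S ∈ Finset.powersetCard m (Finset.univ : Finset (Fin N)),
        (‖∑ i ∈ S, z i‖) ^ 2
      = (N.choose m : ℝ) * ((m : ℝ) / ((N : ℝ) * ((N : ℝ) - 1))) *
          (((N : ℝ) - (m : ℝ)) * ∑ i, (‖z i‖) ^ 2
            + ((m : ℝ) - 1) * (‖∑ i, z i‖) ^ 2) := by
  classical
  set f : Fin N → Fin N → ℝ := fun i j => (z i * (starRingEnd ℂ) (z j)).re with hf
  set P := Finset.powersetCard m (Finset.univ : Finset (Fin N)) with hP
  have habs : ∀ (s : Finset (Fin N)), (‖∑ i ∈ s, z i‖) ^ 2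
      = ∑ i ∈ s, ∑ j ∈ s, f i j := by
    intro s
    have h : ((∑ i ∈ s, z i) * (starRingEnd ℂ) (∑ j ∈ s, z j)).re
        = ∑ i ∈ s, ∑ j ∈ s, f i j := by
      rw [map_sum, Finset.sum_mul_sum, Complex.re_sum]
      exact Finset.sum_congr rfl fun i _ => Complex.re_sum _ _
    rw [Complex.sq_norm, ← h, Complex.mul_conj, Complex.ofReal_re]
  -- counts
  have hcardu : (Finset.univ : Finset (Fin N)).card = N := by simp
  have hc1 : ∀ i : Fin N,
      (Finset.filter (fun S => insert i {i} ⊆ S) P).card = (N - 1).choose (m - 1) := by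
    intro i
    have : (insert i {i} : Finset (Fin N)) = {i} := by simp
    rw [hP, this, cnt _ _ (Finset.subset_univ _) m (by simpa using hm)]
    simp [hcardu]
  have hc2 : ∀ i j : Fin N, i ≠ j →
      (Finset.filter (fun S => insert i {j} ⊆ S) P).card
        = if 2 ≤ m then (N - 2).choose (m - 2) else 0 := by
    intro i j hij
    have hcard : (insert i {j} : Finset (Fin N)).card = 2 := by
      rw [Finset.card_insert_of_notMem (by simpa using hij)]; simp
    by_cases h2 : 2 ≤ m
    · rw [if_pos h2, hP, cnt _ _ (Finset.subset_univ _) m (by omega), hcard, hcardu]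
    · rw [if_neg h2, hP, cnt0 _ _ m (by omega)]
  -- main exchange
  have key : ∑ S ∈ P, (‖∑ i ∈ S, z i‖) ^ 2
      = ∑ i : Fin N, ∑ j : Fin N,
          ((Finset.filter (fun S => insert i {j} ⊆ S) P).card : ℝ) * f i j := by
    calc ∑ S ∈ P, (‖∑ i ∈ S, z i‖) ^ 2
        = ∑ S ∈ P, ∑ i : Fin N, ∑ j : Fin N,
            (if insert i {j} ⊆ S then f i j else 0) := by
          refine Finset.sum_congr rfl fun S _ => ?_
          rw [habs]
          simp only [Finset.insert_subset_iff, Finset.singleton_subset_iff, ite_and]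
          symm
          trans (∑ x : Fin N, if x ∈ S then ∑ j ∈ S, f x j else 0)
          · refine Finset.sum_congr rfl fun x _ => ?_
            by_cases hx : x ∈ S <;> simp [hx, Finset.sum_ite_mem]
          · rw [Finset.sum_ite_mem, Finset.univ_inter]
      _ = ∑ i : Fin N, ∑ j : Fin N, ∑ S ∈ P,
            (if insert i {j} ⊆ S then f i j else 0) := by
          rw [Finset.sum_comm]
          exact Finset.sum_congr rfl fun i _ => Finset.sum_comm
      _ = _ := by
          refine Finset.sum_congr rfl fun i _ => Finset.sum_congr rfl fun j _ => ?_
          rw [← Finset.sum_filter, Finset.sum_const, nsmul_eq_mul]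
  set C1 : ℝ := ((N - 1).choose (m - 1) : ℝ) with hC1
  set C2 : ℝ := ((if 2 ≤ m then (N - 2).choose (m - 2) else 0 : ℕ) : ℝ) with hC2
  set A : ℝ := ∑ i, (‖z i‖) ^ 2 with hA
  set B : ℝ := (‖∑ i, z i‖) ^ 2 with hB
  have hAf : ∑ i : Fin N, f i i = A := by
    refine Finset.sum_congr rfl fun i _ => ?_
    simp [hf, Complex.mul_conj, Complex.sq_norm, Complex.normSq_apply]
  have hBf : ∑ i : Fin N, ∑ j : Fin N, f i j = B := (habs Finset.univ).symm
  have key2 : ∑ S ∈ P, (‖∑ i ∈ S, z i‖) ^ 2 = C2 * B + (C1 - C2) * A := by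
    rw [key]
    have hcnt : ∀ i j : Fin N,
        ((Finset.filter (fun S => insert i {j} ⊆ S) P).card : ℝ) * f i j
          = C2 * f i j + (if i = j then (C1 - C2) * f i j else 0) := by
      intro i j
      by_cases hij : i = j
      · subst hij
        rw [hc1 i, if_pos rfl]; ring
      · rw [hc2 i j hij, if_neg hij]; ring
    calc ∑ i : Fin N, ∑ j : Fin N,
            ((Finset.filter (fun S => insert i {j} ⊆ S) P).card : ℝ) * f i j
        = ∑ i : Fin N, ∑ j : Fin N,
            (C2 * f i j + (if i = j then (C1 - C2) * f i j else 0)) :=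
          Finset.sum_congr rfl fun i _ => Finset.sum_congr rfl fun j _ => hcnt i j
      _ = ∑ i : Fin N, (C2 * (∑ j : Fin N, f i j) + (C1 - C2) * f i i) := by
          refine Finset.sum_congr rfl fun i _ => ?_
          rw [Finset.sum_add_distrib, Finset.sum_ite_eq, if_pos (Finset.mem_univ i),
            ← Finset.mul_sum]
      _ = C2 * B + (C1 - C2) * A := by
          rw [Finset.sum_add_distrib, ← Finset.mul_sum, ← Finset.mul_sum, hBf, hAf]
  rw [key2]
  have hN0 : (N : ℝ) ≠ 0 := by positivity
  have hN1 : (N : ℝ) - 1 ≠ 0 := by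
    have : (2 : ℝ) ≤ (N : ℝ) := by exact_mod_cast hN
    linarith
  have hD : (N : ℝ) * ((N : ℝ) - 1) ≠ 0 := mul_ne_zero hN0 hN1
  by_cases h2 : 2 ≤ m
  · have e1n : N * (N - 1).choose (m - 1) = N.choose m * m := by
      have h := Nat.add_one_mul_choose_eq (N - 1) (m - 1)
      rwa [show N - 1 + 1 = N by omega, show m - 1 + 1 = m by omega] at h
    have e2n : (N - 1) * (N - 2).choose (m - 2) = (N - 1).choose (m - 1) * (m - 1) := by
      have h := Nat.add_one_mul_choose_eq (N - 2) (m - 2)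
      rwa [show N - 2 + 1 = N - 1 by omega, show m - 2 + 1 = m - 1 by omega] at h
    have e1r : (N : ℝ) * C1 = (N.choose m : ℝ) * (m : ℝ) := by
      rw [hC1]; exact_mod_cast e1n
    have e2r : ((N : ℝ) - 1) * C2 = C1 * ((m : ℝ) - 1) := by
      rw [hC1, hC2, if_pos h2]
      have h := congrArg (fun k : ℕ => (k : ℝ)) e2n
      simp only [Nat.cast_mul] at h
      rw [Nat.cast_sub (by omega : 1 ≤ N), Nat.cast_sub (by omega : 1 ≤ m)] at h
      push_cast at h ⊢
      linarith [h]
    have final : (C2 * B + (C1 - C2) * A) * ((N : ℝ) * ((N : ℝ) - 1))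
        = (N.choose m : ℝ) * (m : ℝ) * (((N : ℝ) - (m : ℝ)) * A + ((m : ℝ) - 1) * B) := by
      linear_combination (((N : ℝ) - (m : ℝ)) * A + ((m : ℝ) - 1) * B) * e1r
        + ((N : ℝ) * B - (N : ℝ) * A) * e2r
    rw [show (N.choose m : ℝ) * ((m : ℝ) / ((N : ℝ) * ((N : ℝ) - 1))) *
          (((N : ℝ) - (m : ℝ)) * A + ((m : ℝ) - 1) * B)
        = ((N.choose m : ℝ) * (m : ℝ) * (((N : ℝ) - (m : ℝ)) * A + ((m : ℝ) - 1) * B))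
            / ((N : ℝ) * ((N : ℝ) - 1)) from by ring,
      eq_div_iff hD]
    exact final
  · have hm1 : m = 1 := by omega
    subst hm1
    have hC1v : C1 = 1 := by rw [hC1]; simp
    have hC2v : C2 = 0 := by rw [hC2]; norm_num
    rw [hC1v, hC2v, Nat.choose_one_right]
    push_cast
    field_simp
    ring
end

section
/- Let s and l be positive integers and let m be a positive integer with m ≤ s·l. Then ∑ C(l,k_1)·C(l,k_2)···C(l,k_s)·(k_1 + 2k_2 + ⋯ + s·k_s) = (m(s+1)/2) · C(sl, m), where the sum ranges over all s-tuples (k_1, …, k_s) of nonnegative integers with k_i ≤ l for each i and ∑_{i=1}^s k_i = m. -/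
open Finset

lemma piFinset_succ_eq (s l : ℕ) :
    Fintype.piFinset (fun _ : Fin (s + 1) => Finset.range (l + 1)) =
      (Finset.range (l + 1) ×ˢ Fintype.piFinset fun _ : Fin s => Finset.range (l + 1)).map
        (Fin.consEquiv fun _ => ℕ).toEmbedding := by
  ext k
  simp only [Fintype.mem_piFinset, Finset.mem_map, Finset.mem_product, Equiv.coe_toEmbedding]
  constructor
  · intro h
    exact ⟨(k 0, Fin.tail k), ⟨h 0, fun i => h i.succ⟩, Fin.cons_self_tail k⟩
  · rintro ⟨⟨a, f⟩, ⟨ha, hf⟩, rfl⟩ i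
    refine Fin.cases ?_ ?_ i <;> simp [Fin.consEquiv, ha, hf]

lemma vand (l : ℕ) : ∀ s m : ℕ,
    (∑ k ∈ (Fintype.piFinset fun _ : Fin s => Finset.range (l + 1)).filter
        (fun k => ∑ i, k i = m), ∏ i, l.choose (k i)) = (s * l).choose m := by
  intro s
  induction s with
  | zero =>
    intro m
    cases m with
    | zero => simp
    | succ m => simp
  | succ s ih =>
    intro m
    rw [Finset.sum_filter, piFinset_succ_eq, Finset.sum_map, Finset.sum_product]
    have inner : ∀ a : ℕ,
        (∑ f ∈ Fintype.piFinset fun _ : Fin s => Finset.range (l + 1),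
          if (∑ i, ((Fin.consEquiv fun _ => ℕ).toEmbedding (a, f)) i = m) then
            ∏ i, l.choose (((Fin.consEquiv fun _ => ℕ).toEmbedding (a, f)) i) else 0)
        = if a ≤ m then l.choose a * (s * l).choose (m - a) else 0 := by
      intro a
      have hce : ∀ f : Fin s → ℕ, ((Fin.consEquiv fun _ => ℕ).toEmbedding (a, f)) = Fin.cons a f :=
        fun f => rfl
      simp only [hce, Fin.sum_univ_succ, Fin.prod_univ_succ, Fin.cons_zero, Fin.cons_succ]
      by_cases h : a ≤ m
      · rw [if_pos h]
        have key : ∀ f : Fin s → ℕ,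
            (if a + ∑ i, f i = m then l.choose a * ∏ i, l.choose (f i) else 0)
            = l.choose a * (if ∑ i, f i = m - a then ∏ i, l.choose (f i) else 0) := by
          intro f
          by_cases h2 : ∑ i, f i = m - a
          · rw [if_pos (by omega), if_pos h2]
          · rw [if_neg (by omega), if_neg h2, mul_zero]
        rw [Finset.sum_congr rfl fun f _ => key f, ← Finset.mul_sum, ← Finset.sum_filter, ih]
      · rw [if_neg h]
        exact Finset.sum_eq_zero fun f _ => by rw [if_neg (by omega)]
    rw [Finset.sum_congr rfl fun a _ => inner a]
    set N := max l m + 1 with hN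
    rw [show (∑ a ∈ Finset.range (l + 1),
        if a ≤ m then l.choose a * (s * l).choose (m - a) else 0)
        = ∑ a ∈ Finset.range N, if a ≤ m then l.choose a * (s * l).choose (m - a) else 0 from
      Finset.sum_subset (Finset.range_subset_range.2 (by omega)) (fun a _ ha => by
        rw [Finset.mem_range, not_lt] at ha
        by_cases h : a ≤ m
        · rw [if_pos h, Nat.choose_eq_zero_of_lt (by omega), Nat.zero_mul]
        · rw [if_neg h])]
    rw [← Finset.sum_filter]
    have hfil : (Finset.range N).filter (fun a => a ≤ m) = Finset.range (m + 1) := by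
      ext a; simp only [Finset.mem_filter, Finset.mem_range, hN]; omega
    rw [hfil, show (s + 1) * l = l + s * l by ring, Nat.add_choose_eq,
      Finset.Nat.sum_antidiagonal_eq_sum_range_succ_mk]

theorem stmt_8 (s l : ℕ) (hs : 1 ≤ s) (hl : 1 ≤ l)
    (m : ℕ) (hm : 1 ≤ m) (hmn : m ≤ s * l) :
    ∑ k ∈ Finset.filter (fun k : Fin s → ℕ => ∑ i, k i = m)
        (Fintype.piFinset fun _ => Finset.range (l + 1)),
      ((∏ i, (l.choose (k i) : ℚ)) * ∑ i, ((i.val : ℚ) + 1) * (k i : ℚ))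
      = ((m : ℚ) * ((s : ℚ) + 1) / 2) * ((s * l).choose m : ℚ) := by
  classical
  set S := Finset.filter (fun k : Fin s → ℕ => ∑ i, k i = m)
      (Fintype.piFinset fun _ => Finset.range (l + 1)) with hS
  have hsum : (∑ k ∈ S, ∏ i, (l.choose (k i) : ℚ)) = ((s * l).choose m : ℚ) := by
    exact_mod_cast congrArg (Nat.cast : ℕ → ℚ) (vand l s m)
  have hmem : ∀ k ∈ S, (fun j => k (Fin.rev j)) ∈ S := by
    intro k hk
    rw [hS, Finset.mem_filter, Fintype.mem_piFinset] at hk ⊢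
    obtain ⟨h1, h2⟩ := hk
    refine ⟨fun j => h1 (Fin.rev j), ?_⟩
    rw [← h2]
    exact Fintype.sum_bijective Fin.rev Fin.rev_bijective _ _ (fun x => rfl)
  have hrevsum : ∀ k : Fin s → ℕ,
      (∑ i, (((Fin.rev i).val : ℚ) + 1) * (k (Fin.rev i) : ℚ))
        = ∑ i, ((i.val : ℚ) + 1) * (k i : ℚ) :=
    fun k => (Fintype.sum_bijective Fin.rev Fin.rev_bijective _ _
      (fun x => by rw [Fin.rev_rev])).symm
  have hrevprod : ∀ k : Fin s → ℕ,
      (∏ i, (l.choose (k (Fin.rev i)) : ℚ)) = ∏ i, (l.choose (k i) : ℚ) :=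
    fun k => Fintype.prod_bijective Fin.rev Fin.rev_bijective _ _
      (fun x => rfl)
  have h2 : (∑ k ∈ S, (∏ i, (l.choose (k i) : ℚ)) * ∑ i, ((i.val : ℚ) + 1) * (k i : ℚ))
      = ∑ k ∈ S, (∏ i, (l.choose (k i) : ℚ)) *
          ∑ i, (((Fin.rev i).val : ℚ) + 1) * (k i : ℚ) := by
    refine Finset.sum_nbij' (fun k => fun j => k (Fin.rev j)) (fun k => fun j => k (Fin.rev j))
      hmem hmem (fun k _ => by funext j; simp [Fin.rev_rev])
      (fun k _ => by funext j; simp [Fin.rev_rev]) (fun k _ => ?_)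
    rw [hrevprod k, hrevsum k]
  have hdbl : (2 : ℚ) * (∑ k ∈ S, (∏ i, (l.choose (k i) : ℚ)) *
        ∑ i, ((i.val : ℚ) + 1) * (k i : ℚ))
      = ((s : ℚ) + 1) * (m : ℚ) * ((s * l).choose m : ℚ) := by
    rw [two_mul]
    nth_rewrite 2 [h2]
    rw [← Finset.sum_add_distrib]
    have : ∀ k ∈ S, (∏ i, (l.choose (k i) : ℚ)) * (∑ i, ((i.val : ℚ) + 1) * (k i : ℚ)) +
        (∏ i, (l.choose (k i) : ℚ)) * (∑ i, (((Fin.rev i).val : ℚ) + 1) * (k i : ℚ))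
        = (((s : ℚ) + 1) * (m : ℚ)) * ∏ i, (l.choose (k i) : ℚ) := by
      intro k hk
      rw [hS, Finset.mem_filter] at hk
      have hk2 : ((∑ i, k i : ℕ) : ℚ) = (m : ℚ) := by rw [hk.2]
      push_cast at hk2
      rw [← mul_add, ← Finset.sum_add_distrib]
      have hco : (∑ i : Fin s, (((i.val : ℚ) + 1) * (k i : ℚ) +
          (((Fin.rev i).val : ℚ) + 1) * (k i : ℚ)))
          = ((s : ℚ) + 1) * (m : ℚ) := by
        have : ∀ i : Fin s, ((i.val : ℚ) + 1) * (k i : ℚ) +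
            (((Fin.rev i).val : ℚ) + 1) * (k i : ℚ) = ((s : ℚ) + 1) * (k i : ℚ) := by
          intro i
          have h1 : (Fin.rev i).val = s - (i.val + 1) := Fin.val_rev i
          have h2 : ((Fin.rev i).val : ℚ) = (s : ℚ) - ((i.val : ℚ) + 1) := by
            rw [h1, Nat.cast_sub i.2]; push_cast; ring
          rw [h2]; ring
        rw [Finset.sum_congr rfl fun i _ => this i, ← Finset.mul_sum, hk2]
      rw [hco]; ring
    rw [Finset.sum_congr rfl this, ← Finset.mul_sum, hsum]
  linarith [hdbl]
end

section
/- Let p ≥ 5 be a prime. Then for every positive integer s, ∑ C(p,k_1)·C(p,k_2)···C(p,k_s)·(k_1 + 2k_2 + ⋯ + s·k_s) ≡ s(s+1)p/2 (mod p⁴), where the sum ranges over all s-tuples (k_1, …, k_s) of nonnegative integers with ∑_{i=1}^s k_i = p. -/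
open Finset

-- L1: harmonic square sum
lemma harm_sq (p : ℕ) (hp : p.Prime) (hp5 : 5 ≤ p) :
    ∑ k ∈ Ico 1 p, ((k : ZMod p)⁻¹)^2 = 0 := by
  haveI : Fact p.Prime := ⟨hp⟩
  have h0 : ∑ k ∈ Ico 1 p, ((k : ZMod p)⁻¹)^2 = ∑ k ∈ range p, ((k : ZMod p)⁻¹)^2 := by
    rw [range_eq_Ico, Finset.sum_eq_sum_Ico_succ_bot (by omega : 0 < p)]
    simp
  have h1 : ∑ k ∈ range p, ((k : ZMod p)⁻¹)^2 = ∑ x : ZMod p, (x⁻¹)^2 := by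
    refine Finset.sum_nbij' (fun k => ((k : ZMod p))) (fun x => x.val)
      (fun a _ => mem_univ _) (fun x _ => mem_range.mpr (ZMod.val_lt x))
      (fun a ha => ZMod.val_cast_of_lt (mem_range.mp ha))
      (fun x _ => ZMod.natCast_zmod_val x) (fun a _ => rfl)
  have h2 : ∑ x : ZMod p, (x⁻¹)^2 = ∑ x : ZMod p, x^2 := by
    exact Fintype.sum_bijective (fun x : ZMod p => x⁻¹)
      (Function.Involutive.bijective (fun x => inv_inv x)) _ _ (fun x => rfl)
  rw [h0, h1, h2]
  apply FiniteField.sum_pow_lt_card_sub_one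
  rw [ZMod.card]; omega

-- L2: choose ≡ (-1)^m
lemma choose_neg_one (p : ℕ) (hp : p.Prime) :
    ∀ m n : ℕ, m < p → p ∣ (n+1) → ((n.choose m : ZMod p)) = (-1)^m := by
  haveI : Fact p.Prime := ⟨hp⟩
  intro m
  induction m with
  | zero => intro n _ _; simp
  | succ m ih =>
    intro n hm hn
    have hple : p ≤ n + 1 := Nat.le_of_dvd (by omega) hn
    have hmn : m + 1 ≤ n := by omega
    have key : (n.choose (m+1) : ZMod p) * (m+1) = (n.choose m : ZMod p) * ((n : ZMod p) - m) := by
      have := Nat.choose_succ_right_eq n m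
      have hcast := congrArg (fun x : ℕ => (x : ZMod p)) this
      push_cast at hcast
      rwa [Nat.cast_sub (by omega : m ≤ n)] at hcast
    have hn1 : (n : ZMod p) = -1 := by
      have : ((n + 1 : ℕ) : ZMod p) = 0 := (ZMod.natCast_eq_zero_iff _ _).mpr hn
      push_cast at this; linear_combination this
    have hihn : (n.choose m : ZMod p) = (-1)^m := ih n (by omega) hn
    have hne : ((m+1 : ℕ) : ZMod p) ≠ 0 := by
      rw [Ne, ZMod.natCast_eq_zero_iff]
      intro h; exact absurd (Nat.le_of_dvd (by omega) h) (by omega)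
    have : (n.choose (m+1) : ZMod p) * (m+1) = (-1)^(m+1) * (m+1) := by
      rw [key, hn1, hihn]; ring
    push_cast at hne this
    exact mul_right_cancel₀ hne this

-- Part A: multi-Vandermonde
lemma vander {ι : Type*} [DecidableEq ι] (p : ℕ) (t : Finset ι) :
    ∀ n, ∑ f ∈ t.piAntidiag n, ∏ i ∈ t, p.choose (f i) = (t.card * p).choose n := by
  induction t using Finset.cons_induction with
  | empty =>
    intro n
    cases n with
    | zero => simp
    | succ n => simp
  | cons i t hi ih =>
    intro n
    rw [piAntidiag_cons, sum_disjiUnion]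
    have hmain : ∀ ab ∈ antidiagonal n,
        (∑ f ∈ (t.piAntidiag ab.2).map
            (addRightEmbedding fun j => if j = i then ab.1 else 0),
          ∏ j ∈ cons i t hi, p.choose (f j)) = p.choose ab.1 * (t.card * p).choose ab.2 := by
      rintro ⟨a, b⟩ -
      rw [Finset.sum_map]
      have : ∀ g ∈ t.piAntidiag b,
          (∏ j ∈ cons i t hi, p.choose ((addRightEmbedding fun j => if j = i then a else 0) g j))
            = p.choose a * ∏ j ∈ t, p.choose (g j) := by
        intro g hg
        rw [mem_piAntidiag] at hg
        have hgi : g i = 0 := by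
          by_contra h; exact hi (hg.2 i h)
        rw [Finset.prod_cons]
        simp only [addRightEmbedding_apply]
        congr 1
        · simp [hgi]
        · apply Finset.prod_congr rfl
          intro j hj
          have : j ≠ i := fun h => hi (h ▸ hj)
          simp [this]
      rw [Finset.sum_congr rfl this, ← Finset.mul_sum, ih]
    rw [Finset.sum_congr rfl hmain, Finset.card_cons,
      show (t.card + 1) * p = p + t.card * p by ring, Nat.add_choose_eq]

lemma set_eq (p s : ℕ) (hp : 0 < p) :
    Finset.filter (fun k : Fin s → ℕ => ∑ i, k i = p)
        (Fintype.piFinset fun _ => Finset.range (p + 1))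
      = Finset.piAntidiag Finset.univ p := by
  ext k
  simp only [mem_filter, Fintype.mem_piFinset, mem_range, mem_piAntidiag, mem_univ,
    implies_true, and_true, Nat.lt_succ_iff]
  constructor
  · rintro ⟨-, h⟩; exact h
  · intro h
    refine ⟨fun i => ?_, h⟩
    calc k i ≤ ∑ j, k j := Finset.single_le_sum (fun j _ => Nat.zero_le _) (mem_univ i)
    _ = p := h

-- middle sum divisible by p^3
lemma mid_claim (p : ℕ) (hp : p.Prime) (hp5 : 5 ≤ p) (s : ℕ) (hs : 1 ≤ s) :
    ((∑ k ∈ Ico 1 p, (s*p).choose k * p.choose (p - k) : ℕ) : ZMod (p^3)) = 0 := by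
  haveI : Fact p.Prime := ⟨hp⟩
  have hsp : 0 < s * p := Nat.mul_pos hs (by omega)
  have hoddp : Odd p := hp.odd_of_ne_two (by omega)
  have h0 : ((p : ZMod (p^3)))^3 = 0 := by exact_mod_cast ZMod.natCast_self (p^3)
  -- coprimality helper
  have hcop : ∀ k ∈ Ico 1 p, Nat.Coprime (k*(p-k)) (p^3) := by
    intro k hk
    rw [mem_Ico] at hk
    apply Nat.Coprime.pow_right
    apply Nat.Coprime.mul
    · exact Nat.coprime_comm.mp ((hp.coprime_iff_not_dvd).mpr
        (fun h => absurd (Nat.le_of_dvd (by omega) h) (by omega)))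
    · exact Nat.coprime_comm.mp ((hp.coprime_iff_not_dvd).mpr
        (fun h => absurd (Nat.le_of_dvd (by omega) h) (by omega)))
  have hunit : ∀ k ∈ Ico 1 p,
      ((k*(p-k) : ℕ) : ZMod (p^3)) * ((k*(p-k) : ℕ) : ZMod (p^3))⁻¹ = 1 :=
    fun k hk => ZMod.coe_mul_inv_eq_one _ (hcop k hk)
  -- per-term value
  have hterm : ∀ k ∈ Ico 1 p,
      (((s*p).choose k * p.choose (p - k) : ℕ) : ZMod (p^3))
        = (s : ZMod (p^3)) * -((p : ZMod (p^3))^2) * ((k*(p-k) : ℕ) : ZMod (p^3))⁻¹ := by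
    intro k hk
    have hk' := mem_Ico.mp hk
    have hk1 : 1 ≤ k := hk'.1
    have hk2 : k < p := hk'.2
    set A := (s*p).choose k with hA
    set B := p.choose (p-k) with hB
    set A' := (s*p-1).choose (k-1) with hA'
    set B' := (p-1).choose (p-k-1) with hB'
    -- nat identities
    have h1 : s*p * A' = A * k := by
      have := Nat.add_one_mul_choose_eq (s*p-1) (k-1)
      rwa [Nat.sub_add_cancel hsp,
        Nat.sub_add_cancel hk1] at this
    have h2 : p * B' = B * (p-k) := by
      have := Nat.add_one_mul_choose_eq (p-1) (p-k-1)
      rwa [Nat.sub_add_cancel (by omega : 1 ≤ p),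
        Nat.sub_add_cancel (by omega : 1 ≤ p - k)] at this
    have hnat : (k*(p-k)) * (A * B) = (s*p^2) * (A' * B') := by
      calc (k*(p-k)) * (A * B) = (A * k) * (B * (p-k)) := by ring
      _ = (s*p*A') * (p*B') := by rw [← h1, ← h2]
      _ = (s*p^2) * (A' * B') := by ring
    -- d ≡ -1 mod p
    have hd : ((A' * B' : ℕ) : ZMod p) = -1 := by
      have e1 : ((A' : ℕ) : ZMod p) = (-1)^(k-1) := by
        apply choose_neg_one p hp (k-1) (s*p-1) (by omega)
        rw [Nat.sub_add_cancel hsp]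
        exact dvd_mul_left p s
      have e2 : ((B' : ℕ) : ZMod p) = (-1)^(p-k-1) := by
        apply choose_neg_one p hp (p-k-1) (p-1) (by omega)
        rw [Nat.sub_add_cancel (by omega : 1 ≤ p)]
      have hodd2 : Odd (p - 2) := by
        obtain ⟨m, hm⟩ := hoddp
        exact ⟨m - 1, by omega⟩
      push_cast
      rw [e1, e2, ← pow_add, show k - 1 + (p - k - 1) = p - 2 by omega, hodd2.neg_one_pow]
    -- p^2 * d = -p^2 in ZMod p^3
    have hd3 : (p : ZMod (p^3))^2 * ((A' : ZMod (p^3)) * (B' : ZMod (p^3)))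
        + (p : ZMod (p^3))^2 = 0 := by
      have hz : ((A' * B' + 1 : ℕ) : ZMod p) = 0 := by push_cast [hd]; ring
      obtain ⟨c, hc⟩ := (ZMod.natCast_eq_zero_iff _ _).mp hz
      have hc' : (A' : ZMod (p^3)) * (B' : ZMod (p^3)) + 1 = (p : ZMod (p^3)) * c := by
        exact_mod_cast congrArg (fun x : ℕ => (x : ZMod (p^3))) hc
      linear_combination ((p : ZMod (p^3)))^2 * hc' + (c : ZMod (p^3)) * h0
    -- assemble
    have hE1 : ((k*(p-k) : ℕ) : ZMod (p^3)) * (((s*p).choose k * p.choose (p - k) : ℕ) : ZMod (p^3))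
        = (s : ZMod (p^3)) * (p : ZMod (p^3))^2 * ((A' : ZMod (p^3)) * (B' : ZMod (p^3))) := by
      have := congrArg (fun x : ℕ => (x : ZMod (p^3))) hnat
      push_cast at this ⊢
      linear_combination this
    have hE3 := hunit k hk
    push_cast at hE1 hE3 ⊢
    linear_combination ((k : ZMod (p^3)) * ((p-k : ℕ) : ZMod (p^3)))⁻¹ * hE1
      + (s : ZMod (p^3)) * ((k : ZMod (p^3)) * ((p-k : ℕ) : ZMod (p^3)))⁻¹ * hd3
      - ((A : ZMod (p^3)) * (B : ZMod (p^3))) * hE3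
  -- the inverse-sum is killed by p^2
  have hW : (p : ZMod (p^3))^2 * (∑ k ∈ Ico 1 p, ((k*(p-k) : ℕ) : ZMod (p^3))⁻¹) = 0 := by
    set W := ∑ k ∈ Ico 1 p, ((k*(p-k) : ℕ) : ZMod (p^3))⁻¹ with hWdef
    have hdvd : p ∣ p ^ 3 := dvd_pow_self p (by norm_num)
    set f := ZMod.castHom hdvd (ZMod p) with hf
    have hfW : f W = 0 := by
      rw [hWdef, map_sum]
      have hfe : ∀ k ∈ Ico 1 p, f (((k*(p-k) : ℕ) : ZMod (p^3))⁻¹) = -(((k : ZMod p))⁻¹)^2 := by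
        intro k hk
        have hk' := mem_Ico.mp hk
        have h3 : f ((k*(p-k) : ℕ) : ZMod (p^3)) * f (((k*(p-k) : ℕ) : ZMod (p^3))⁻¹) = 1 := by
          rw [← map_mul, hunit k hk, map_one]
        have hfu : f ((k*(p-k) : ℕ) : ZMod (p^3)) = -((k : ZMod p))^2 := by
          rw [map_natCast]
          push_cast [Nat.cast_sub hk'.2.le]
          rw [ZMod.natCast_self]
          ring
        rw [← inv_eq_of_mul_eq_one_right h3, hfu]
        rw [inv_neg, ← inv_pow]
      rw [Finset.sum_congr rfl hfe, Finset.sum_neg_distrib]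
      rw [harm_sq p hp hp5, neg_zero]
    have hWv : ((W.val : ℕ) : ZMod p) = 0 := by
      have hmap : f ((W.val : ℕ) : ZMod (p^3)) = ((W.val : ℕ) : ZMod p) := map_natCast f _
      rw [ZMod.natCast_zmod_val] at hmap
      rw [← hmap]
      exact hfW
    obtain ⟨c, hc⟩ := (ZMod.natCast_eq_zero_iff _ _).mp hWv
    calc (p : ZMod (p^3))^2 * W = (p : ZMod (p^3))^2 * ((W.val : ℕ) : ZMod (p^3)) := by
          rw [ZMod.natCast_zmod_val]
    _ = ((p^2 * W.val : ℕ) : ZMod (p^3)) := by push_cast; ring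
    _ = ((p^3 * c : ℕ) : ZMod (p^3)) := by rw [hc]; push_cast; ring
    _ = 0 := by push_cast; linear_combination (c : ZMod (p^3)) * h0
  rw [Nat.cast_sum]
  have : ∀ k ∈ Ico 1 p, (((s*p).choose k * p.choose (p - k) : ℕ) : ZMod (p^3))
      = (s : ZMod (p^3)) * -((p : ZMod (p^3))^2) * ((k*(p-k) : ℕ) : ZMod (p^3))⁻¹ := hterm
  rw [Finset.sum_congr rfl this, ← Finset.mul_sum]
  linear_combination (-(s : ZMod (p^3))) * hW

-- Jacobsthal-type congruence
lemma key_cong (p : ℕ) (hp : p.Prime) (hp5 : 5 ≤ p) :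
    ∀ s : ℕ, (s*p).choose p ≡ s [MOD p^3] := by
  intro s
  induction s with
  | zero =>
    rw [Nat.zero_mul, Nat.choose_eq_zero_of_lt (by omega : 0 < p)]
  | succ s ih =>
    have hsplit : ((s+1)*p).choose p
        = 1 + (∑ k ∈ Ico 1 p, (s*p).choose k * p.choose (p - k)) + (s*p).choose p := by
      rw [show (s+1)*p = s*p + p by ring, Nat.add_choose_eq,
        Finset.Nat.sum_antidiagonal_eq_sum_range_succ_mk, Finset.sum_range_succ]
      rw [range_eq_Ico, Finset.sum_eq_sum_Ico_succ_bot (by omega : 0 < p)]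
      simp [Nat.add_comm]
    have hM : (∑ k ∈ Ico 1 p, (s*p).choose k * p.choose (p - k)) ≡ 0 [MOD p^3] := by
      rcases Nat.eq_zero_or_pos s with rfl | hs
      · have : ∀ k ∈ Ico 1 p, (0*p).choose k * p.choose (p - k) = 0 := by
          intro k hk
          have hk' := mem_Ico.mp hk
          simp [Nat.choose_eq_zero_of_lt (by omega : 0 < k)]
        rw [Finset.sum_congr rfl this]
        simp [Nat.ModEq.refl]
      · have := mid_claim p hp hp5 s hs
        rw [ZMod.natCast_eq_zero_iff] at this
        exact (Nat.modEq_zero_iff_dvd).mpr this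
    calc ((s+1)*p).choose p
        = 1 + (∑ k ∈ Ico 1 p, (s*p).choose k * p.choose (p - k)) + (s*p).choose p := hsplit
    _ ≡ 1 + 0 + s [MOD p^3] := (Nat.ModEq.add (Nat.ModEq.add (Nat.ModEq.refl 1) hM) ih)
    _ = s + 1 := by ring

theorem stmt_9 (p : ℕ) (hp : p.Prime) (hp5 : 5 ≤ p) (s : ℕ) (hs : 1 ≤ s) :
    (∑ k ∈ Finset.filter (fun k : Fin s → ℕ => ∑ i, k i = p)
        (Fintype.piFinset fun _ => Finset.range (p + 1)),
      (∏ i, p.choose (k i)) * ∑ i, (i.val + 1) * k i)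
      ≡ s * (s + 1) / 2 * p [MOD p ^ 4] := by
  haveI : Fact p.Prime := ⟨hp⟩
  have hne2 : p ≠ 2 := by omega
  set S := Finset.filter (fun k : Fin s → ℕ => ∑ i, k i = p)
      (Fintype.piFinset fun _ => Finset.range (p + 1)) with hS
  have hSeq : S = Finset.piAntidiag Finset.univ p := set_eq p s (by omega)
  have hA : ∑ k ∈ S, ∏ i, p.choose (k i) = (s*p).choose p := by
    rw [hSeq, vander p Finset.univ p, Finset.card_univ, Fintype.card_fin]
  -- index 0
  have hs0 : (0 : ℕ) < s := hs
  set i0 : Fin s := (⟨0, hs0⟩ : Fin s) with hi0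
  set T : Fin s → ℕ := fun i => ∑ k ∈ S, (∏ m, p.choose (k m)) * k i with hT
  -- symmetry
  have hsym : ∀ i : Fin s, T i = T i0 := by
    intro i
    apply Finset.sum_nbij' (fun k : Fin s → ℕ => k ∘ Equiv.swap i i0)
      (fun k : Fin s → ℕ => k ∘ Equiv.swap i i0)
    · intro k hk
      rw [hS, mem_filter, Fintype.mem_piFinset] at hk ⊢
      refine ⟨fun m => hk.1 _, ?_⟩
      rw [← hk.2]
      exact Equiv.sum_comp (Equiv.swap i i0) k
    · intro k hk
      rw [hS, mem_filter, Fintype.mem_piFinset] at hk ⊢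
      refine ⟨fun m => hk.1 _, ?_⟩
      rw [← hk.2]
      exact Equiv.sum_comp (Equiv.swap i i0) k
    · intro k _
      funext m
      simp [Function.comp, Equiv.swap_apply_self]
    · intro k _
      funext m
      simp [Function.comp, Equiv.swap_apply_self]
    · intro k _
      have h1 : (∏ m, p.choose ((k ∘ Equiv.swap i i0) m)) = ∏ m, p.choose (k m) :=
        Equiv.prod_comp (Equiv.swap i i0) (fun m => p.choose (k m))
      have h2 : (k ∘ Equiv.swap i i0) i0 = k i := by
        simp [Function.comp, Equiv.swap_apply_right]
      rw [h1, h2]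
  -- decomposition of LHS
  have hLHS : (∑ k ∈ S, (∏ i, p.choose (k i)) * ∑ i, (i.val + 1) * k i)
      = ∑ i : Fin s, (i.val + 1) * T i := by
    have step1 : ∀ k ∈ S, (∏ i, p.choose (k i)) * ∑ i, (i.val + 1) * k i
        = ∑ i : Fin s, (i.val + 1) * ((∏ m, p.choose (k m)) * k i) := by
      intro k _
      rw [Finset.mul_sum]
      exact Finset.sum_congr rfl (fun i _ => by ring)
    rw [Finset.sum_congr rfl step1, Finset.sum_comm]
    exact Finset.sum_congr rfl (fun i _ => by rw [← Finset.mul_sum])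
  have hLHS2 : (∑ k ∈ S, (∏ i, p.choose (k i)) * ∑ i, (i.val + 1) * k i)
      = (∑ i : Fin s, (i.val + 1)) * T i0 := by
    rw [hLHS, Finset.sum_congr rfl (fun i (_ : i ∈ Finset.univ) => by rw [hsym i]),
      ← Finset.sum_mul]
  -- Gauss
  have hGauss : (∑ i : Fin s, (i.val + 1)) * 2 = s * (s + 1) := by
    rw [Fin.sum_univ_eq_sum_range (fun j => j + 1) s]
    have hg := Finset.sum_range_id_mul_two (s + 1)
    rw [Finset.sum_range_succ' (fun i => i) s] at hg
    rw [Nat.succ_sub_one] at hg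
    rw [add_zero] at hg
    rw [hg, Nat.mul_comm]
  -- s * T = choose * p
  have hsT : s * T i0 = (s*p).choose p * p := by
    have e1 : ∑ i : Fin s, T i = s * T i0 := by
      rw [Finset.sum_congr rfl (fun i (_ : i ∈ Finset.univ) => hsym i), Finset.sum_const,
        smul_eq_mul, Finset.card_univ, Fintype.card_fin]
    have e2 : ∑ i : Fin s, T i = (s*p).choose p * p := by
      rw [hT]
      rw [Finset.sum_comm]
      have hstep : ∀ k ∈ S, (∑ i : Fin s, (∏ m, p.choose (k m)) * k i)
          = (∏ m, p.choose (k m)) * p := by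
        intro k hk
        rw [← Finset.mul_sum]
        congr 1
        exact (Finset.mem_filter.mp hk).2
      rw [Finset.sum_congr rfl hstep, ← Finset.sum_mul, hA]
    rw [← e1, e2]
  -- modular arithmetic
  have hmod : (s*p).choose p * p ≡ s * p [MOD p^4] := by
    have := (key_cong p hp hp5 s).mul_right' p
    rwa [show p^3 * p = p^4 by ring] at this
  have h2dvd : 2 ∣ s * (s + 1) := (Nat.even_mul_succ_self s).two_dvd
  have hdiv : 2 * (s * (s + 1) / 2) = s * (s + 1) := Nat.mul_div_cancel' h2dvd
  have hcp : Nat.Coprime p 2 := (Nat.coprime_primes hp Nat.prime_two).mpr hne2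
  have hcp2 : Nat.gcd (p^4) 2 = 1 := Nat.Coprime.pow_left 4 hcp
  apply Nat.ModEq.cancel_left_of_coprime hcp2
  calc 2 * (∑ k ∈ S, (∏ i, p.choose (k i)) * ∑ i, (i.val + 1) * k i)
      = ((∑ i : Fin s, (i.val + 1)) * 2) * T i0 := by rw [hLHS2]; ring
  _ = (s + 1) * (s * T i0) := by rw [hGauss]; ring
  _ = (s + 1) * ((s*p).choose p * p) := by rw [hsT]
  _ ≡ (s + 1) * (s * p) [MOD p^4] := Nat.ModEq.mul_left _ hmod
  _ = 2 * (s * (s + 1) / 2 * p) := by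
      rw [show 2 * (s * (s + 1) / 2 * p) = (2 * (s * (s + 1) / 2)) * p by ring, hdiv]; ring
end

section
/- Let p be a Wolstenholme prime, i.e., a prime p satisfying C(2p−1, p−1) ≡ 1 (mod p⁴). Then for every positive integer s, ∑ C(p,k_1)·C(p,k_2)···C(p,k_s)·(k_1 + 2k_2 + ⋯ + s·k_s) ≡ s(s+1)p/2 (mod p⁵), where the sum ranges over all s-tuples (k_1, …, k_s) of nonnegative integers with ∑_{i=1}^s k_i = p. -/
open Finset Polynomial



lemma coeff_one_add_X_pow_ps (n k : ℕ) :
    (PowerSeries.coeff k) ((1 + PowerSeries.X : PowerSeries ℕ) ^ n) = n.choose k := by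
  have : ((1 + Polynomial.X : Polynomial ℕ) ^ n : Polynomial ℕ).coeff k = n.choose k := by
    rw [Polynomial.coeff_one_add_X_pow]; norm_num
  rw [← this, ← Polynomial.coeff_coe]
  push_cast
  norm_num

lemma vdm {s : ℕ} (f : Fin s → ℕ) (m : ℕ) :
    ∑ l ∈ Finset.finsuppAntidiag (Finset.univ : Finset (Fin s)) m,
      ∏ i, (f i).choose (l i) = (∑ i, f i).choose m := by
  have h : ((1 + PowerSeries.X : PowerSeries ℕ) ^ (∑ i, f i)) =
      ∏ i, (1 + PowerSeries.X : PowerSeries ℕ) ^ (f i) :=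
    (Finset.prod_pow_eq_pow_sum _ _ _).symm
  have := coeff_one_add_X_pow_ps (∑ i, f i) m
  rw [h, PowerSeries.coeff_prod] at this
  rw [← this]
  apply Finset.sum_congr rfl
  intro l _
  apply Finset.prod_congr rfl
  intro i _
  rw [coeff_one_add_X_pow_ps]

lemma coe_symm_k {s : ℕ} (k : Fin s → ℕ) : ⇑(Finsupp.equivFunOnFinite.symm k) = k :=
  Finsupp.equivFunOnFinite.apply_symm_apply k

lemma transfer {s p : ℕ} (m : ℕ) (hm : m ≤ p) (g : (Fin s → ℕ) → ℕ) :
    ∑ k ∈ Finset.filter (fun k : Fin s → ℕ => ∑ i, k i = m)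
        (Fintype.piFinset fun _ => Finset.range (p + 1)), g k
    = ∑ l ∈ Finset.finsuppAntidiag (Finset.univ : Finset (Fin s)) m, g ⇑l := by
  apply Finset.sum_nbij' (i := fun k => Finsupp.equivFunOnFinite.symm k)
    (j := fun l => ⇑l)
  · intro k hk
    simp only [Finset.mem_filter, Fintype.mem_piFinset, Finset.mem_range] at hk
    rw [Finset.mem_finsuppAntidiag]
    refine ⟨?_, Finset.subset_univ _⟩
    simpa [coe_symm_k] using hk.2
  · intro l hl
    rw [Finset.mem_finsuppAntidiag] at hl
    simp only [Finset.mem_filter, Fintype.mem_piFinset, Finset.mem_range]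
    constructor
    · intro i
      have : l i ≤ m := by
        rw [← hl.1]
        exact Finset.single_le_sum (f := fun i => l i) (fun _ _ => Nat.zero_le _) (Finset.mem_univ i)
      omega
    · exact hl.1
  · intro k _; exact coe_symm_k k
  · intro l _; exact Finsupp.equivFunOnFinite_symm_coe l
  · intro k _; rw [coe_symm_k]

-- ℕ product identity: ∏_{j<p-1} (m*p + j + 1) = (p-1)! * ((m+1)*p - 1).choose (p-1)
lemma vdm' {s p : ℕ} (f : Fin s → ℕ) (m : ℕ) (hm : m ≤ p) :
    ∑ k ∈ Finset.filter (fun k : Fin s → ℕ => ∑ i, k i = m)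
        (Fintype.piFinset fun _ => Finset.range (p + 1)),
      ∏ i, (f i).choose (k i) = (∑ i, f i).choose m := by
  rw [transfer m hm (fun k => ∏ i, (f i).choose (k i))]
  exact vdm f m

lemma Sj {s q : ℕ} (j : Fin s) (hs : 1 ≤ s) :
    ∑ k ∈ Finset.filter (fun k : Fin s → ℕ => ∑ i, k i = q + 1)
        (Fintype.piFinset fun _ => Finset.range (q + 1 + 1)),
      (∏ i, (q+1).choose (k i)) * k j
    = (q+1) * (s * (q+1) - 1).choose q := by
  classical
  rw [← Finset.sum_filter_of_ne (p := fun k => k j ≠ 0)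
    (by intro k _ h hkj; apply h; rw [hkj]; ring)]
  have key : ∑ k ∈ (Finset.filter (fun k : Fin s → ℕ => ∑ i, k i = q + 1)
        (Fintype.piFinset fun _ => Finset.range (q + 1 + 1))).filter (fun k => k j ≠ 0),
        (∏ i, (q+1).choose (k i)) * k j
      = ∑ k ∈ Finset.filter (fun k : Fin s → ℕ => ∑ i, k i = q)
        (Fintype.piFinset fun _ => Finset.range (q + 1 + 1)),
        (q+1) * ∏ i, (Function.update (fun _ => q+1) j q i).choose (k i) := by
    apply Finset.sum_nbij' (i := fun k => Function.update k j (k j - 1))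
      (j := fun k => Function.update k j (k j + 1))
    · intro k hk
      simp only [Finset.mem_filter, Fintype.mem_piFinset, Finset.mem_range] at hk
      obtain ⟨⟨h1, h2⟩, h3⟩ := hk
      have hsum := Finset.sum_update_of_mem (Finset.mem_univ j) k (k j - 1)
      have hsum2 := Finset.sum_update_of_mem (Finset.mem_univ j) k (k j)
      rw [Function.update_eq_self] at hsum2
      simp only [Finset.mem_filter, Fintype.mem_piFinset, Finset.mem_range]
      constructor
      · intro i
        by_cases hij : i = j
        · subst hij; rw [Function.update_self]; have := h1 i; omega
        · rw [Function.update_of_ne hij]; exact h1 i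
      · rw [hsum]; omega
    · intro k hk
      simp only [Finset.mem_filter, Fintype.mem_piFinset, Finset.mem_range] at hk
      obtain ⟨h1, h2⟩ := hk
      have hkj : k j ≤ q := by
        rw [← h2]
        exact Finset.single_le_sum (f := fun i => k i) (fun _ _ => Nat.zero_le _) (Finset.mem_univ j)
      have hsum := Finset.sum_update_of_mem (Finset.mem_univ j) k (k j + 1)
      have hsum2 := Finset.sum_update_of_mem (Finset.mem_univ j) k (k j)
      rw [Function.update_eq_self] at hsum2
      simp only [Finset.mem_filter, Fintype.mem_piFinset, Finset.mem_range,
        Function.update_self]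
      refine ⟨⟨?_, ?_⟩, ?_⟩
      · intro i
        by_cases hij : i = j
        · subst hij; rw [Function.update_self]; omega
        · rw [Function.update_of_ne hij]; exact h1 i
      · rw [hsum]; omega
      · omega
    · intro k hk
      simp only [Finset.mem_filter] at hk
      have : k j - 1 + 1 = k j := by have := hk.2; omega
      rw [Function.update_self, this, Function.update_idem, Function.update_eq_self]
    · intro k hk
      rw [Function.update_self, Nat.add_sub_cancel, Function.update_idem, Function.update_eq_self]
    · intro k hk
      simp only [Finset.mem_filter] at hk
      have hkj : k j ≠ 0 := hk.2
      have e1 : ∏ i, (q+1).choose (k i)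
          = (q+1).choose (k j) * ∏ i ∈ Finset.univ.erase j, (q+1).choose (k i) :=
        (Finset.mul_prod_erase Finset.univ _ (Finset.mem_univ j)).symm
      have e2 : (∏ i, (Function.update (fun _ => q+1) j q i).choose
            (Function.update k j (k j - 1) i))
          = q.choose (k j - 1) * ∏ i ∈ Finset.univ.erase j, (q+1).choose (k i) := by
        rw [← Finset.mul_prod_erase Finset.univ _ (Finset.mem_univ j)]
        rw [Function.update_self, Function.update_self]
        congr 1
        apply Finset.prod_congr rfl
        intro i hi
        have hij : i ≠ j := Finset.ne_of_mem_erase hi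
        rw [Function.update_of_ne hij, Function.update_of_ne hij]
      rw [e1, e2]
      have hmc := Nat.add_one_mul_choose_eq q (k j - 1)
      have hone : k j - 1 + 1 = k j := by omega
      rw [hone] at hmc
      rw [← mul_assoc, hmc]
      ring
  rw [key, ← Finset.mul_sum]
  congr 1
  rw [vdm' (p := q+1) (Function.update (fun _ => q+1) j q) q (Nat.le_succ q)]
  congr 1
  rw [Finset.sum_update_of_mem (Finset.mem_univ j)]
  rw [Finset.sum_const]
  have hcard : (Finset.univ \ {j}).card = s - 1 := by
    rw [Finset.card_sdiff_of_subset (by simp)]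
    simp
  rw [hcard, smul_eq_mul]
  obtain ⟨t, rfl⟩ := Nat.exists_eq_add_of_le hs
  have h1 : (1+t)*(q+1) = (q+1) + t*(q+1) := by ring
  simp only [Nat.add_sub_cancel_left, Nat.add_sub_cancel]
  symm
  apply Nat.sub_eq_of_eq_add
  ring

lemma prodFact (p m : ℕ) (hp : 1 ≤ p) :
    ∏ j ∈ Finset.range (p-1), (m*p + j + 1)
      = ((m+1)*p - 1).choose (p-1) * (p-1).factorial := by
  set N := (m+1)*p - 1 with hN
  have hsplit : N = m*p + (p-1) := by
    have : (m+1)*p = m*p + p := by ring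
    omega
  have h1 : N.factorial = (m*p).factorial * ∏ j ∈ Finset.range (p-1), (m*p + j + 1) := by
    rw [← Finset.prod_range_add_one_eq_factorial, hsplit, Finset.prod_range_add,
      Finset.prod_range_add_one_eq_factorial]
  have h2 : N.choose (p-1) * ((p-1).factorial * (m*p).factorial) = N.factorial := by
    have hle : p - 1 ≤ N := by omega
    have := Nat.choose_mul_factorial_mul_factorial hle
    have hNsub : N - (p-1) = m*p := by omega
    rw [hNsub] at this
    rw [← this]; ring
  have := h1.symm.trans h2.symm
  -- (m*p)! * P = C * ((p-1)! * (m*p)!)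
  apply Nat.eq_of_mul_eq_mul_left (Nat.factorial_pos (m*p))
  rw [this]; ring

-- functional equation
lemma Lrefl (p : ℕ) (hp : p.Prime) (hp2 : p ≠ 2) (m : ℤ) :
    ∏ j ∈ Finset.range (p-1), ((-(m+1))*p + (j+1) : ℤ)
      = ∏ j ∈ Finset.range (p-1), (m*p + (j+1) : ℤ) := by
  have hodd : Odd p := hp.odd_of_ne_two hp2
  have h2 : 2 ≤ p := hp.two_le
  rw [← Finset.prod_range_reflect (fun j => ((-(m+1))*p + ((j:ℤ)+1))) (p-1)]
  have step : ∀ j ∈ Finset.range (p-1),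
      ((-(m+1))*p + ((((p-1) - 1 - j : ℕ) : ℤ)+1)) = (-1) * (m*p + (j+1) : ℤ) := by
    intro j hj
    rw [Finset.mem_range] at hj
    have hcast : (((p-1) - 1 - j : ℕ) : ℤ) = (p:ℤ) - 2 - j := by
      have h2j : 2 + j ≤ p := by omega
      have : (p-1) - 1 - j = p - (2 + j) := by omega
      rw [this, Nat.cast_sub h2j]
      push_cast
      ring
    rw [hcast]; ring
  rw [Finset.prod_congr rfl step, Finset.prod_mul_distrib, Finset.prod_const]
  have heven : Even (p-1) := by
    rcases hodd with ⟨t, ht⟩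
    exact ⟨t, by omega⟩
  rw [Finset.card_range, heven.neg_one_pow, one_mul]

lemma stepB (p : ℕ) (hp : p.Prime) (hp5 : 5 ≤ p)
    (hw : (2*p-1).choose (p-1) ≡ 1 [MOD p^4]) (n : ℕ) (hn : 1 ≤ n) :
    (n*p-1).choose (p-1) ≡ 1 [MOD p^4] := by
  have hp2 : p ≠ 2 := by omega
  set N : ℤ := (p:ℤ)^4 with hNdef
  set Q : Polynomial ℤ := ∏ j ∈ Finset.range (p-1), (X + C ((j:ℤ)+1)) with hQ
  have heval : ∀ x : ℤ, Q.eval x = ∏ j ∈ Finset.range (p-1), (x + ((j:ℤ)+1)) := by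
    intro x
    rw [hQ, Polynomial.eval_prod]
    apply Finset.prod_congr rfl
    intro j _
    simp
  have hF : ∀ m : ℕ, Q.eval ((m:ℤ)*p)
      = (((m+1)*p - 1).choose (p-1) : ℤ) * ((p-1).factorial : ℤ) := by
    intro m
    rw [heval]
    have := prodFact p m (by omega)
    have hcast : ((∏ j ∈ Finset.range (p-1), (m*p + j + 1) : ℕ) : ℤ)
        = ∏ j ∈ Finset.range (p-1), ((m:ℤ)*p + ((j:ℤ)+1)) := by
      push_cast
      apply Finset.prod_congr rfl
      intro j _
      ring
    rw [← hcast, this]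
    push_cast
    ring
  have hQrefl : ∀ m : ℤ, Q.eval ((-(m+1))*p) = Q.eval (m*p) := by
    intro m
    rw [heval, heval]
    exact Lrefl p hp hp2 m
  -- degree bound
  have hdeg : Q.natDegree < p := by
    have h1 : Q.natDegree ≤ ∑ j ∈ Finset.range (p-1),
        (X + C ((j:ℤ)+1)).natDegree := Polynomial.natDegree_prod_le _ _
    have h2 : ∀ j ∈ Finset.range (p-1), (X + C ((j:ℤ)+1)).natDegree = 1 := by
      intro j _; exact Polynomial.natDegree_X_add_C _
    rw [Finset.sum_congr rfl h2, Finset.sum_const, Finset.card_range, smul_eq_mul,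
      mul_one] at h1
    omega
  set a : ℤ := Q.coeff 0 with ha
  set b : ℤ := Q.coeff 1 * p with hb
  set c : ℤ := Q.coeff 2 * p^2 with hc
  set d : ℤ := Q.coeff 3 * p^3 with hd
  have hg : ∀ m : ℤ, N ∣ (a + b*m + c*m^2 + d*m^3) - Q.eval (m*p) := by
    intro m
    rw [Polynomial.eval_eq_sum_range' hdeg (m*p)]
    rw [← Finset.sum_range_add_sum_Ico _ (show 4 ≤ p by omega)]
    have h4 : ∑ i ∈ Finset.range 4, Q.coeff i * (m*p)^i
        = a + b*m + c*m^2 + d*m^3 := by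
      simp [Finset.sum_range_succ, ha, hb, hc, hd]
      ring
    have hIco : N ∣ ∑ i ∈ Finset.Ico 4 p, Q.coeff i * (m*p)^i := by
      apply Finset.dvd_sum
      intro i hi
      rw [Finset.mem_Ico] at hi
      have h1 : ((p:ℤ))^4 ∣ ((p:ℤ))^i := pow_dvd_pow _ hi.1
      have h2 : (m*p)^i = m^i * (p:ℤ)^i := by rw [mul_pow]
      rw [h2, hNdef]
      exact Dvd.dvd.mul_left (Dvd.dvd.mul_left h1 _) _
    rw [h4]
    have : a + b*m + c*m^2 + d*m^3 - (a + b*m + c*m^2 + d*m^3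
        + ∑ i ∈ Finset.Ico 4 p, Q.coeff i * (m*p)^i)
        = -(∑ i ∈ Finset.Ico 4 p, Q.coeff i * (m*p)^i) := by ring
    rw [this]
    exact dvd_neg.mpr hIco
  -- coprimality helper
  have hcop : ∀ k : ℕ, ¬ (p ∣ k) → IsCoprime N ((k:ℕ):ℤ) := by
    intro k hk
    have h1 : Nat.Coprime (p^4) k := Nat.Coprime.pow_left _ (hp.coprime_iff_not_dvd.mpr hk)
    have := Nat.isCoprime_iff_coprime.mpr h1
    rw [hNdef]
    push_cast at this
    exact this
  -- key divisibilities
  have D1 : N ∣ (-b + c - d) := by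
    have t1 := hg (-(0+1))
    have t2 := hg 0
    have h := dvd_sub t1 t2
    rw [hQrefl 0] at h
    have e : (a + b*(-(0+1)) + c*(-(0+1))^2 + d*(-(0+1))^3 - Q.eval ((0:ℤ)*p))
        - (a + b*0 + c*0^2 + d*0^3 - Q.eval ((0:ℤ)*p)) = -b + c - d := by ring
    rwa [e] at h
  have D2 : N ∣ (-3*b + 3*c - 9*d) := by
    have t1 := hg (-(1+1))
    have t2 := hg 1
    have h := dvd_sub t1 t2
    rw [hQrefl 1] at h
    have e : (a + b*(-(1+1)) + c*(-(1+1))^2 + d*(-(1+1))^3 - Q.eval ((1:ℤ)*p))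
        - (a + b*1 + c*1^2 + d*1^3 - Q.eval ((1:ℤ)*p)) = -3*b + 3*c - 9*d := by ring
    rwa [e] at h
  have hw' : N ∣ ((2*p-1).choose (p-1) : ℤ) - 1 := by
    have h := (Nat.modEq_iff_dvd (n := p^4)).mp hw
    have h2 : N ∣ (1 - ((2*p-1).choose (p-1) : ℤ)) := by
      rw [hNdef]
      exact_mod_cast h
    rw [show ((2*p-1).choose (p-1) : ℤ) - 1 = -(1 - ((2*p-1).choose (p-1) : ℤ)) by ring,
      dvd_neg]
    exact h2
  have hev1 : Q.eval ((1:ℤ)*p) = ((2*p-1).choose (p-1) : ℤ) * ((p-1).factorial : ℤ) := by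
    rw [show ((1:ℤ)*(p:ℤ)) = ((1:ℕ):ℤ)*p by norm_num, hF 1]
  have hev0 : Q.eval ((0:ℤ)*p) = ((p-1).factorial : ℤ) := by
    rw [show ((0:ℤ)*p) = ((0:ℕ):ℤ)*p by norm_num, hF 0]
    simp
  have D3 : N ∣ (b + c + d) := by
    have t1 := hg 1
    have t0 := hg 0
    have hevd : N ∣ Q.eval ((1:ℤ)*p) - Q.eval ((0:ℤ)*p) := by
      rw [hev1, hev0]
      have e : ((2*p-1).choose (p-1) : ℤ) * ((p-1).factorial : ℤ) - ((p-1).factorial : ℤ)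
          = (((2*p-1).choose (p-1) : ℤ) - 1) * ((p-1).factorial : ℤ) := by ring
      rw [e]
      exact Dvd.dvd.mul_right hw' _
    have h := dvd_add (dvd_sub t1 t0) hevd
    have e : (a + b*1 + c*1^2 + d*1^3 - Q.eval ((1:ℤ)*p)) - (a + b*0 + c*0^2 + d*0^3 - Q.eval ((0:ℤ)*p))
        + (Q.eval ((1:ℤ)*p) - Q.eval ((0:ℤ)*p)) = b + c + d := by ring
    rwa [e] at h
  have hpnd6 : ¬ p ∣ 6 := by
    intro h6
    have := Nat.le_of_dvd (by norm_num) h6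
    interval_cases p
    · revert h6; decide
    · exact absurd hp (by norm_num)
  have Dd : N ∣ d := by
    have h : N ∣ d * 6 := by
      have h2 := dvd_sub (Dvd.dvd.mul_left D1 3) D2
      have e : 3 * (-b + c - d) - (-3*b + 3*c - 9*d) = d * 6 := by ring
      rwa [e] at h2
    exact (hcop 6 hpnd6).dvd_of_dvd_mul_right h
  have Db : N ∣ b := by
    have h : N ∣ b * 2 := by
      have h2 := dvd_sub D3 (dvd_add D1 (Dvd.dvd.mul_left Dd 2))
      have e : (b + c + d) - ((-b + c - d) + 2*d) = b * 2 := by ring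
      rwa [e] at h2
    have hpnd2 : ¬ p ∣ 2 := by
      intro h2'
      have := Nat.le_of_dvd (by norm_num) h2'
      omega
    exact (hcop 2 hpnd2).dvd_of_dvd_mul_right h
  have Dc : N ∣ c := by
    have h2 := dvd_sub (dvd_sub D3 Db) Dd
    have e : (b + c + d) - b - d = c := by ring
    rwa [e] at h2
  have hfinal : N ∣ ((n*p-1).choose (p-1) : ℤ) - 1 := by
    set m0 : ℤ := ((n-1 : ℕ) : ℤ) with hm0
    have hevn : Q.eval (m0*p) = ((n*p-1).choose (p-1) : ℤ) * ((p-1).factorial : ℤ) := by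
      have h := hF (n-1)
      have hn1 : (n-1) + 1 = n := by omega
      rw [hn1] at h
      exact h
    have hdvd : N ∣ (((n*p-1).choose (p-1) : ℤ) - 1) * ((p-1).factorial : ℤ) := by
      have t1 := hg m0
      have t0 := hg 0
      have h := dvd_add (dvd_sub t0 t1) (dvd_add (dvd_add (Dvd.dvd.mul_right Db m0)
        (Dvd.dvd.mul_right Dc (m0^2))) (Dvd.dvd.mul_right Dd (m0^3)))
      have e : ((a + b*0 + c*0^2 + d*0^3 - Q.eval ((0:ℤ)*p)) - (a + b*m0 + c*m0^2 + d*m0^3 - Q.eval (m0*p)))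
          + ((b*m0 + c*m0^2) + d*m0^3) = Q.eval (m0*p) - Q.eval ((0:ℤ)*p) := by ring
      rw [e, hevn, hev0] at h
      have e2 : ((n*p-1).choose (p-1) : ℤ) * ((p-1).factorial : ℤ) - ((p-1).factorial : ℤ)
          = (((n*p-1).choose (p-1) : ℤ) - 1) * ((p-1).factorial : ℤ) := by ring
      rwa [e2] at h
    have hpndf : ¬ p ∣ (p-1).factorial := by
      intro hf
      have := (Nat.Prime.dvd_factorial hp).mp hf
      omega
    exact (hcop ((p-1).factorial) hpndf).dvd_of_dvd_mul_right hdvd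
  rw [Nat.modEq_iff_dvd]
  push_cast
  rw [show ((1:ℤ) - ((n*p-1).choose (p-1) : ℤ)) = -(((n*p-1).choose (p-1) : ℤ) - 1) by ring]
  exact (dvd_neg.mpr hfinal)

theorem stmt_11 (p : ℕ) (hp : p.Prime)
    (hw : (2 * p - 1).choose (p - 1) ≡ 1 [MOD p ^ 4]) (s : ℕ) (hs : 1 ≤ s) :
    (∑ k ∈ Finset.filter (fun k : Fin s → ℕ => ∑ i, k i = p)
        (Fintype.piFinset fun _ => Finset.range (p + 1)),
      (∏ i, p.choose (k i)) * ∑ i, (i.val + 1) * k i)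
      ≡ s * (s + 1) / 2 * p [MOD p ^ 5] := by
  rcases Nat.lt_or_ge p 5 with hlt | hp5
  · interval_cases p
    · exact absurd hp (by norm_num)
    · exact absurd hp (by norm_num)
    · exact absurd hw (by decide)
    · exact absurd hw (by decide)
    · exact absurd hp (by norm_num)
  · obtain ⟨q, rfl⟩ : ∃ q, p = q + 1 := ⟨p-1, by omega⟩
    have expand : (∑ k ∈ Finset.filter (fun k : Fin s → ℕ => ∑ i, k i = (q+1))
        (Fintype.piFinset fun _ => Finset.range ((q+1) + 1)),
          (∏ i, (q+1).choose (k i)) * ∑ i, (i.val + 1) * k i)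
        = (∑ j : Fin s, (j.val+1)) * ((q+1) * (s*(q+1)-1).choose q) := by
      calc (∑ k ∈ Finset.filter (fun k : Fin s → ℕ => ∑ i, k i = (q+1))
            (Fintype.piFinset fun _ => Finset.range ((q+1) + 1)),
            (∏ i, (q+1).choose (k i)) * ∑ i, (i.val + 1) * k i)
          = ∑ k ∈ Finset.filter (fun k : Fin s → ℕ => ∑ i, k i = (q+1))
            (Fintype.piFinset fun _ => Finset.range ((q+1) + 1)),
            ∑ j : Fin s, (j.val+1) * ((∏ i, (q+1).choose (k i)) * k j) := by
            apply Finset.sum_congr rfl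
            intro k _
            rw [Finset.mul_sum]
            apply Finset.sum_congr rfl
            intro j _
            ring
        _ = ∑ j : Fin s, (j.val+1) * ∑ k ∈ Finset.filter (fun k : Fin s → ℕ => ∑ i, k i = (q+1))
            (Fintype.piFinset fun _ => Finset.range ((q+1) + 1)),
            ((∏ i, (q+1).choose (k i)) * k j) := by
            rw [Finset.sum_comm]
            apply Finset.sum_congr rfl
            intro j _
            rw [Finset.mul_sum]
        _ = ∑ j : Fin s, (j.val+1) * ((q+1) * (s*(q+1)-1).choose q) := by
            apply Finset.sum_congr rfl
            intro j _
            rw [Sj j hs]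
        _ = (∑ j : Fin s, (j.val+1)) * ((q+1) * (s*(q+1)-1).choose q) := by
            rw [Finset.sum_mul]
    rw [expand]
    have hG2 : (∑ j : Fin s, (j.val+1)) * 2 = s * (s+1) := by
      rw [Fin.sum_univ_eq_sum_range (fun i => i+1) s]
      have h1 := Finset.sum_range_id_mul_two (s+1)
      have h2 := Finset.sum_range_succ' (fun i => i) s
      simp only [Nat.add_sub_cancel, add_zero] at h1 h2
      rw [← h2, h1, Nat.mul_comm]
    have hhalf : s*(s+1)/2 = ∑ j : Fin s, (j.val+1) :=
      Nat.div_eq_of_eq_mul_left (by norm_num) hG2.symm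
    rw [← hhalf]
    have hB := stepB (q+1) hp hp5 hw s hs
    simp only [Nat.add_sub_cancel] at hB
    have h1 : (q+1) * ((s*(q+1)-1).choose q) ≡ (q+1) * 1 [MOD (q+1) * (q+1)^4] :=
      Nat.ModEq.mul_left' (q+1) hB
    have h2 : (q+1) * (q+1)^4 = (q+1)^5 := by ring
    rw [h2, mul_one] at h1
    calc s*(s+1)/2 * ((q+1) * (s*(q+1)-1).choose q)
        ≡ s*(s+1)/2 * (q+1) [MOD (q+1)^5] := Nat.ModEq.mul_left _ h1
      _ = s*(s+1)/2 * (q+1) := rfl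
end

section
/- Let n ≥ 2 and s be positive integers, and let m be a positive integer with m ≤ s(n−1). Then ∑ C(n−1,k_1)·C(n−1,k_2)···C(n−1,k_s)·(k_1 + k_2·n + ⋯ + k_s·n^{s−1}) = (nˢ − 1)·C(s(n−1)−1, m−1), where the sum ranges over all s-tuples (k_1, …, k_s) of nonnegative integers with k_i ≤ n−1 for each i and ∑_{i=1}^s k_i = m. -/
open Polynomial Finset

/-- Coefficient of a product of truncated generating polynomials. -/
lemma coeff_prod_sum (N s m : ℕ) (c : Fin s → ℕ → ℕ) :
    (∏ i, ∑ k ∈ Finset.range N, Polynomial.C (c i k) * Polynomial.X ^ k).coeff m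
      = ∑ p ∈ Finset.filter (fun p : Fin s → ℕ => ∑ i, p i = m)
          (Fintype.piFinset fun _ => Finset.range N), ∏ i, c i (p i) := by
  rw [Finset.prod_univ_sum]
  have : ∀ p : Fin s → ℕ,
      (∏ i, Polynomial.C (c i (p i)) * Polynomial.X ^ (p i))
        = Polynomial.C (∏ i, c i (p i)) * Polynomial.X ^ (∑ i, p i) := by
    intro p
    rw [Finset.prod_mul_distrib, map_prod, Finset.prod_pow_eq_pow_sum]
  simp_rw [this]
  rw [Polynomial.finset_sum_coeff]
  rw [Finset.sum_filter]
  apply Finset.sum_congr rfl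
  intro p _
  rw [Polynomial.coeff_C_mul, Polynomial.coeff_X_pow]
  by_cases h : ∑ i, p i = m
  · simp [h]
  · simp [h, Ne.symm h]

/-- Truncated binomial generating polynomial. -/
lemma sum_choose_eq (a N : ℕ) (h : a < N) :
    ∑ k ∈ Finset.range N, Polynomial.C (a.choose k) * Polynomial.X ^ k
      = (1 + Polynomial.X : Polynomial ℕ) ^ a := by
  rw [add_comm, add_pow]
  rw [← Finset.sum_subset (Finset.range_subset_range.mpr h)]
  · apply Finset.sum_congr rfl
    intro k _
    simp [mul_comm, Polynomial.C_eq_natCast]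
  · intro k _ hk
    rw [Finset.mem_range, not_lt] at hk
    rw [Nat.choose_eq_zero_of_lt (by omega)]
    simp

lemma sum_mul_choose_eq (a N : ℕ) (ha : 1 ≤ a) (h : a < N) :
    ∑ k ∈ Finset.range N, Polynomial.C (k * a.choose k) * Polynomial.X ^ k
      = Polynomial.C a * (Polynomial.X * (1 + Polynomial.X : Polynomial ℕ) ^ (a - 1)) := by
  obtain ⟨N', rfl⟩ : ∃ N', N = N' + 1 := ⟨N - 1, by omega⟩
  rw [Finset.sum_range_succ']
  have h0 : (Polynomial.C (0 * a.choose 0) * Polynomial.X ^ 0 : Polynomial ℕ) = 0 := by simp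
  rw [h0, add_zero]
  have key : ∀ k, (k + 1) * a.choose (k + 1) = a * (a - 1).choose k := by
    intro k
    have := Nat.add_one_mul_choose_eq (a - 1) k
    have ha' : a - 1 + 1 = a := by omega
    simp only [Nat.succ_eq_add_one, ha'] at this
    rw [this]; ring
  simp_rw [key]
  have : ∀ k : ℕ, (Polynomial.C (a * (a-1).choose k) * Polynomial.X ^ (k+1) : Polynomial ℕ)
      = Polynomial.C a * Polynomial.X * (Polynomial.C ((a-1).choose k) * Polynomial.X ^ k) := by
    intro k
    rw [map_mul]; ring
  simp_rw [this]
  rw [← Finset.mul_sum, sum_choose_eq (a-1) N' (by omega)]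
  ring

lemma geom_nat (n : ℕ) (hn : 2 ≤ n) : ∀ s : ℕ, (∑ j ∈ Finset.range s, n ^ j) * (n - 1) = n ^ s - 1 := by
  intro s
  induction s with
  | zero => simp
  | succ t ih =>
    rw [Finset.sum_range_succ, add_mul, ih, pow_succ]
    have h1 : 1 ≤ n ^ t := Nat.one_le_pow _ _ (by omega)
    have h2 : n ^ t * (n - 1) = n ^ t * n - n ^ t := by
      rw [Nat.mul_sub, mul_one]
    have h3 : n ^ t ≤ n ^ t * n := Nat.le_mul_of_pos_right _ (by omega)
    omega

theorem stmt_12 (n s : ℕ) (hn : 2 ≤ n) (hs : 1 ≤ s)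
    (m : ℕ) (hm : 1 ≤ m) (hmn : m ≤ s * (n - 1)) :
    ∑ k ∈ Finset.filter (fun k : Fin s → ℕ => ∑ i, k i = m)
        (Fintype.piFinset fun _ => Finset.range n),
      (∏ i, (n - 1).choose (k i)) * ∑ i, k i * n ^ (i.val)
      = (n ^ s - 1) * (s * (n - 1) - 1).choose (m - 1) := by
  -- per-coordinate sums
  have key : ∀ j : Fin s,
      ∑ k ∈ Finset.filter (fun k : Fin s → ℕ => ∑ i, k i = m)
          (Fintype.piFinset fun _ => Finset.range n),
        (∏ i, (n - 1).choose (k i)) * k j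
      = (n - 1) * (s * (n - 1) - 1).choose (m - 1) := by
    intro j
    set c : Fin s → ℕ → ℕ := fun i k => if i = j then k * (n-1).choose k else (n-1).choose k
      with hc
    have hprod : ∀ p : Fin s → ℕ, (∏ i, c i (p i)) = (∏ i, (n - 1).choose (p i)) * p j := by
      intro p
      rw [← Finset.mul_prod_erase _ _ (Finset.mem_univ j),
          ← Finset.mul_prod_erase _ _ (Finset.mem_univ j)]
      simp only [hc, if_pos rfl]
      rw [Finset.prod_congr rfl (fun i hi => by
        rw [if_neg (Finset.ne_of_mem_erase hi)])]
      ring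
    calc ∑ k ∈ Finset.filter (fun k : Fin s → ℕ => ∑ i, k i = m)
          (Fintype.piFinset fun _ => Finset.range n),
          (∏ i, (n - 1).choose (k i)) * k j
        = ∑ p ∈ Finset.filter (fun p : Fin s → ℕ => ∑ i, p i = m)
            (Fintype.piFinset fun _ => Finset.range n), ∏ i, c i (p i) := by
          exact Finset.sum_congr rfl fun p _ => (hprod p).symm
      _ = (∏ i, ∑ k ∈ Finset.range n, Polynomial.C (c i k) * Polynomial.X ^ k).coeff m := by
          rw [coeff_prod_sum]
      _ = (n - 1) * (s * (n - 1) - 1).choose (m - 1) := by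
          have hFj : ∑ k ∈ Finset.range n, Polynomial.C (c j k) * Polynomial.X ^ k
              = Polynomial.C (n-1) * (Polynomial.X * (1 + Polynomial.X) ^ (n - 2)) := by
            simp only [hc, if_pos rfl]
            rw [sum_mul_choose_eq (n-1) n (by omega) (by omega)]
            have h11 : n - 1 - 1 = n - 2 := by omega
            rw [h11]
          have hFi : ∀ i : Fin s, i ≠ j →
              (∑ k ∈ Finset.range n, Polynomial.C (c i k) * Polynomial.X ^ k)
              = (1 + Polynomial.X) ^ (n - 1) := by
            intro i hi
            simp only [hc, if_neg hi]
            exact sum_choose_eq (n-1) n (by omega)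
          rw [← Finset.mul_prod_erase _ _ (Finset.mem_univ j), hFj,
            Finset.prod_congr rfl (fun i hi => hFi i (Finset.ne_of_mem_erase hi)),
            Finset.prod_const]
          have hcard : (Finset.univ.erase j).card = s - 1 := by
            rw [Finset.card_erase_of_mem (Finset.mem_univ j), Finset.card_univ, Fintype.card_fin]
          rw [hcard, ← pow_mul, mul_assoc, mul_assoc, ← pow_add]
          have hexp : n - 2 + (n - 1) * (s - 1) = s * (n - 1) - 1 := by
            obtain ⟨s', rfl⟩ : ∃ s', s = s' + 1 := ⟨s - 1, by omega⟩
            have h1 : (s' + 1) * (n - 1) = (n - 1) * s' + (n - 1) := by ring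
            simp only [Nat.add_sub_cancel]
            omega
          rw [hexp, ← mul_assoc]
          obtain ⟨m', rfl⟩ : ∃ m', m = m' + 1 := ⟨m - 1, by omega⟩
          rw [mul_assoc, Polynomial.coeff_C_mul, Polynomial.coeff_X_mul,
            Polynomial.coeff_one_add_X_pow]
          simp
  -- expand the weight and swap sums
  have lhs_eq : ∑ k ∈ Finset.filter (fun k : Fin s → ℕ => ∑ i, k i = m)
        (Fintype.piFinset fun _ => Finset.range n),
      (∏ i, (n - 1).choose (k i)) * ∑ i, k i * n ^ (i.val)
      = ∑ j : Fin s, n ^ (j.val) *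
          ∑ k ∈ Finset.filter (fun k : Fin s → ℕ => ∑ i, k i = m)
            (Fintype.piFinset fun _ => Finset.range n),
          (∏ i, (n - 1).choose (k i)) * k j := by
    simp_rw [Finset.mul_sum]
    rw [Finset.sum_comm]
    apply Finset.sum_congr rfl
    intro j _
    apply Finset.sum_congr rfl
    intro k _
    ring
  rw [lhs_eq]
  simp_rw [key]
  rw [← Finset.sum_mul]
  have hgeom : (∑ j : Fin s, n ^ (j.val)) * (n - 1) = n ^ s - 1 := by
    rw [Fin.sum_univ_eq_sum_range]
    exact geom_nat n hn s
  rw [← mul_assoc, hgeom]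
end

section
/- Let s and m be positive integers with m ≤ s. Then the sum of all positive integers less than 2ˢ whose binary representation contains exactly m ones equals (2ˢ − 1)·C(s−1, m−1). -/
open Finset

lemma digitsum_add_pow (t j : ℕ) (hj : j < 2 ^ t) :
    (Nat.digits 2 (2 ^ t + j)).sum = (Nat.digits 2 j).sum + 1 := by
  have hL : (Nat.digits 2 j).length ≤ t := by
    rcases Nat.eq_zero_or_pos j with rfl | hj0
    · simp
    · rw [Nat.digits_len 2 j one_lt_two hj0.ne']
      have := Nat.log_lt_of_lt_pow hj0.ne' hj
      omega
  have key := Nat.digits_append_zeroes_append_digits (b := 2) (k := t - (Nat.digits 2 j).length)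
    (m := 1) (n := j) one_lt_two one_pos
  rw [Nat.add_sub_cancel' hL] at key
  have h2 : Nat.digits 2 (2 ^ t + j) = Nat.digits 2 j ++
      List.replicate (t - (Nat.digits 2 j).length) 0 ++ Nat.digits 2 1 := by
    rw [key]; ring_nf
  rw [h2]
  have h1 : Nat.digits 2 1 = [1] := by norm_num
  simp [h1]

lemma count_digitsum (s m : ℕ) :
    ((Finset.range (2 ^ s)).filter (fun k => (Nat.digits 2 k).sum = m)).card
      = s.choose m := by
  induction s generalizing m with
  | zero =>
    simp only [pow_zero, Finset.range_one]
    rw [Finset.filter_singleton]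
    rcases Nat.eq_zero_or_pos m with rfl | hm
    · simp
    · rw [Nat.choose_eq_zero_of_lt hm, if_neg (by simpa using (by omega : ¬ (0 = m)))]
      simp
  | succ s ih =>
    have hsplit : Finset.range (2 ^ (s + 1)) =
        Finset.range (2 ^ s) ∪ (Finset.range (2 ^ s)).map (addLeftEmbedding (2 ^ s)) := by
      rw [← Finset.range_add, pow_succ, mul_two]
    have hdisj : Disjoint
        ((Finset.range (2 ^ s)).filter (fun k => (Nat.digits 2 k).sum = m))
        (((Finset.range (2 ^ s)).map (addLeftEmbedding (2 ^ s))).filter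
          (fun k => (Nat.digits 2 k).sum = m)) := by
      apply Finset.disjoint_filter_filter
      rw [Finset.disjoint_left]
      intro a ha hb
      simp only [Finset.mem_map, Finset.mem_range, addLeftEmbedding_apply] at ha hb
      omega
    rw [hsplit, Finset.filter_union, Finset.card_union_of_disjoint hdisj, ih]
    have hmap : (((Finset.range (2 ^ s)).map (addLeftEmbedding (2 ^ s))).filter
        (fun k => (Nat.digits 2 k).sum = m)).card
        = ((Finset.range (2 ^ s)).filter (fun j => (Nat.digits 2 j).sum + 1 = m)).card := by
      rw [Finset.filter_map, Finset.card_map]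
      congr 1
      apply Finset.filter_congr
      intro j hj
      simp only [Finset.mem_range] at hj
      simp only [Function.comp_apply, addLeftEmbedding_apply, digitsum_add_pow s j hj,
        eq_iff_iff]
    rw [hmap]
    rcases Nat.eq_zero_or_pos m with rfl | hm
    · rw [Finset.filter_false_of_mem (by intro x _; omega)]
      simp
    · obtain ⟨m', rfl⟩ : ∃ m', m = m' + 1 := ⟨m - 1, by omega⟩
      have hpred : (Finset.range (2 ^ s)).filter (fun j => (Nat.digits 2 j).sum + 1 = m' + 1)
          = (Finset.range (2 ^ s)).filter (fun j => (Nat.digits 2 j).sum = m') := by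
        apply Finset.filter_congr
        intro j _
        omega
      rw [hpred, ih, Nat.choose_succ_succ]
      simp only [Nat.succ_eq_add_one]
      omega

lemma sum_digitsum (s m : ℕ) (hm : 1 ≤ m) :
    ∑ k ∈ (Finset.range (2 ^ s)).filter (fun k => (Nat.digits 2 k).sum = m), k
      = (2 ^ s - 1) * (s - 1).choose (m - 1) := by
  induction s generalizing m with
  | zero =>
    simp only [pow_zero, Finset.range_one]
    rw [Finset.filter_singleton, if_neg (by simpa using (by omega : ¬ (0 = m)))]
    simp
  | succ s ih =>
    have hsplit : Finset.range (2 ^ (s + 1)) =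
        Finset.range (2 ^ s) ∪ (Finset.range (2 ^ s)).map (addLeftEmbedding (2 ^ s)) := by
      rw [← Finset.range_add, pow_succ, mul_two]
    have hdisj : Disjoint
        ((Finset.range (2 ^ s)).filter (fun k => (Nat.digits 2 k).sum = m))
        (((Finset.range (2 ^ s)).map (addLeftEmbedding (2 ^ s))).filter
          (fun k => (Nat.digits 2 k).sum = m)) := by
      apply Finset.disjoint_filter_filter
      rw [Finset.disjoint_left]
      intro a ha hb
      simp only [Finset.mem_map, Finset.mem_range, addLeftEmbedding_apply] at ha hb
      omega
    rw [hsplit, Finset.filter_union, Finset.sum_union hdisj, ih m hm]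
    have hmap : ∑ k ∈ (((Finset.range (2 ^ s)).map (addLeftEmbedding (2 ^ s))).filter
        (fun k => (Nat.digits 2 k).sum = m)), k
        = ∑ j ∈ (Finset.range (2 ^ s)).filter (fun j => (Nat.digits 2 j).sum = m - 1),
            (2 ^ s + j) := by
      rw [Finset.filter_map, Finset.sum_map]
      have hpred : Finset.filter ((fun k => (Nat.digits 2 k).sum = m) ∘ addLeftEmbedding (2 ^ s))
          (Finset.range (2 ^ s))
          = Finset.filter (fun j => (Nat.digits 2 j).sum = m - 1) (Finset.range (2 ^ s)) := by
        apply Finset.filter_congr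
        intro j hj
        simp only [Finset.mem_range] at hj
        simp only [Function.comp_apply, addLeftEmbedding_apply, digitsum_add_pow s j hj,
          eq_iff_iff]
        omega
      rw [hpred]
      simp [addLeftEmbedding_apply]
    rw [hmap, Finset.sum_add_distrib, Finset.sum_const, smul_eq_mul,
      count_digitsum s (m - 1)]
    have h2s : 1 ≤ 2 ^ s := Nat.one_le_two_pow
    rcases Nat.eq_or_lt_of_le hm with h1 | h2
    · -- m = 1
      subst h1
      have hzero : (Finset.range (2 ^ s)).filter (fun j => (Nat.digits 2 j).sum = 1 - 1)
          = {0} := by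
        ext j
        simp only [Finset.mem_filter, Finset.mem_range, Finset.mem_singleton]
        constructor
        · rintro ⟨_, hsum⟩
          by_contra h0
          have hne : Nat.digits 2 j ≠ [] := Nat.digits_ne_nil_iff_ne_zero.mpr h0
          have hlast := Nat.getLast_digit_ne_zero 2 h0
          have hmem : (Nat.digits 2 j).getLast hne ∈ Nat.digits 2 j :=
            List.getLast_mem hne
          have hpos : 0 < (Nat.digits 2 j).sum :=
            lt_of_lt_of_le (Nat.pos_of_ne_zero hlast)
              (List.single_le_sum (fun _ _ => Nat.zero_le _) _ hmem)
          omega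
        · rintro rfl
          exact ⟨Nat.pow_pos two_pos, by simp⟩
      rw [hzero]
      simp only [Finset.sum_singleton, Nat.sub_self, Nat.choose_zero_right, mul_one, add_zero,
        Nat.choose_zero_right]
      rw [pow_succ]
      omega
    · -- m ≥ 2
      obtain ⟨m', rfl⟩ : ∃ m', m = m' + 2 := ⟨m - 2, by omega⟩
      rw [show m' + 2 - 1 = m' + 1 from rfl, ih (m' + 1) (by omega)]
      simp only [Nat.add_sub_cancel, Nat.succ_sub_one]
      rcases Nat.eq_zero_or_pos s with rfl | hs
      · simp [Nat.choose_eq_zero_of_lt (by omega : 0 < m' + 1)]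
      · have hch : s.choose (m' + 1) = (s - 1).choose (m' + 1) + (s - 1).choose m' := by
          obtain ⟨t, rfl⟩ : ∃ t, s = t + 1 := ⟨s - 1, by omega⟩
          simp only [Nat.add_sub_cancel, Nat.choose_succ_succ, Nat.succ_eq_add_one]
          omega
        obtain ⟨Q, hQ⟩ : ∃ Q, 2 ^ s = Q + 1 := ⟨2 ^ s - 1, by omega⟩
        rw [hch, pow_succ, hQ]
        have h21 : (Q + 1) * 2 - 1 = 2 * Q + 1 := by omega
        rw [h21]
        have h11 : Q + 1 - 1 = Q := by omega
        rw [h11]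
        ring

theorem stmt_13 (s m : ℕ) (hs : 1 ≤ s) (hm : 1 ≤ m) (hms : m ≤ s) :
    ∑ k ∈ Finset.filter (fun k => 0 < k ∧ (Nat.digits 2 k).sum = m)
        (Finset.range (2 ^ s)), k
      = (2 ^ s - 1) * (s - 1).choose (m - 1) := by
  rw [← sum_digitsum s m hm]
  congr 1
  apply Finset.filter_congr
  intro k _
  constructor
  · exact fun h => h.2
  · intro h
    refine ⟨?_, h⟩
    rcases Nat.eq_zero_or_pos k with rfl | hk
    · simp at h; omega
    · exact hk
end

section
/- Let 𝕂 be ℝ or ℂ and let N ≥ 1. Let s ≥ 2, let n_1, …, n_s be positive integers, let A_1, …, A_s be N×N matrices over 𝕂, and let m be a positive integer with 2 ≤ m ≤ ∑_{i=1}^s n_i. Then ∑ C(n_1,k_1)·C(n_2,k_2)···C(n_s,k_s)·(k_1 A_1 + k_2 A_2 + ⋯ + k_s A_s)² = C(∑_{i=1}^s n_i − 2, m−1)·∑_{i=1}^s n_i A_i² + C(∑_{i=1}^s n_i − 2, m−2)·(∑_{i=1}^s n_i A_i)², where the sum ranges over all s-tuples (k_1, …, k_s) of nonnegative integers with k_i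 ≤ n_i for each i and ∑_{i=1}^s k_i = m, and A² denotes the matrix product A·A. -/
open Finset


private lemma sum_piFinset_cons {s : ℕ} {M : Type*} [AddCommMonoid M]
    (S : Fin (s+1) → Finset ℕ) (g : (Fin (s+1) → ℕ) → M) :
    ∑ k ∈ Fintype.piFinset S, g k
      = ∑ x ∈ S 0, ∑ k ∈ Fintype.piFinset (Fin.tail S), g (Fin.cons x k) := by
  have h := Finset.filter_piFinset_eq_map_consEquiv S (fun _ => True)
  simp only [Finset.filter_true] at h
  rw [h, Finset.sum_map, Finset.sum_product]
  rfl

private lemma vandermonde : ∀ (s : ℕ) (n : Fin s → ℕ) (m : ℕ),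
    ∑ k ∈ Finset.filter (fun k : Fin s → ℕ => ∑ i, k i = m)
        (Fintype.piFinset fun i => Finset.range (n i + 1)),
      ∏ i, (n i).choose (k i) = (∑ i, n i).choose m := by
  intro s
  induction s with
  | zero =>
    intro n m
    rw [Finset.sum_filter]
    rw [Fintype.piFinset_of_isEmpty]
    rw [Finset.sum_unique_nonempty _ _ Finset.univ_nonempty]
    cases m <;> simp
  | succ s ih =>
    intro n m
    rw [Finset.sum_filter, sum_piFinset_cons]
    have inner : ∀ x : ℕ, (∑ k ∈ Fintype.piFinset (Fin.tail fun i => Finset.range (n i + 1)),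
        if ∑ i, (Fin.cons x k : Fin (s+1) → ℕ) i = m then ∏ i, (n i).choose ((Fin.cons x k : Fin (s+1) → ℕ) i) else 0)
        = if x ≤ m then (n 0).choose x * (∑ i, Fin.tail n i).choose (m - x) else 0 := by
      intro x
      by_cases hx : x ≤ m
      · rw [if_pos hx, ← ih (Fin.tail n) (m - x), Finset.sum_filter, Finset.mul_sum]
        refine Finset.sum_congr rfl fun k _ => ?_
        have hsum : (∑ i, (Fin.cons x k : Fin (s+1) → ℕ) i) = x + ∑ i, k i := by
          rw [Fin.sum_cons]
        have hiff : (∑ i, (Fin.cons x k : Fin (s+1) → ℕ) i = m) ↔ (∑ i, k i = m - x) := by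
          rw [hsum]; omega
        have hprod : (∏ i, (n i).choose ((Fin.cons x k : Fin (s+1) → ℕ) i))
            = (n 0).choose x * ∏ i, (Fin.tail n i).choose (k i) := by
          rw [Fin.prod_univ_succ]
          rfl
        by_cases h2 : ∑ i, k i = m - x
        · rw [if_pos (hiff.2 h2), if_pos h2, hprod]
        · rw [if_neg (fun h => h2 (hiff.1 h)), if_neg h2, mul_zero]
      · rw [if_neg hx]
        refine Finset.sum_eq_zero fun k _ => ?_
        rw [if_neg]
        rw [Fin.sum_cons]
        omega
    rw [Finset.sum_congr rfl fun x _ => inner x]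
    -- now prove: ∑ x ∈ range (n 0 + 1), ite (x ≤ m) (C(n0,x)*C(R,m-x)) 0 = (∑ i, n i).choose m
    rw [Fin.sum_univ_succ, Nat.add_choose_eq, Finset.Nat.sum_antidiagonal_eq_sum_range_succ_mk]
    have e1 : ∑ x ∈ Finset.range (n 0 + 1),
          (if x ≤ m then (n 0).choose x * (∑ i, Fin.tail n i).choose (m - x) else 0)
        = ∑ x ∈ Finset.range (n 0 + m + 1),
          (if x ≤ m then (n 0).choose x * (∑ i, Fin.tail n i).choose (m - x) else 0) := by
      refine Finset.sum_subset (Finset.range_subset_range.2 (by omega)) fun x _ hx => ?_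
      have : n 0 < x := by simp only [Finset.mem_range] at hx ⊢; omega
      by_cases hxm : x ≤ m
      · rw [if_pos hxm, Nat.choose_eq_zero_of_lt this, zero_mul]
      · rw [if_neg hxm]
    have e2 : ∑ x ∈ Finset.range (m + 1),
          (n 0).choose x * (∑ i, Fin.tail n i).choose (m - x)
        = ∑ x ∈ Finset.range (n 0 + m + 1),
          (if x ≤ m then (n 0).choose x * (∑ i, Fin.tail n i).choose (m - x) else 0) := by
      rw [← Finset.sum_filter]
      apply Finset.sum_congr
      · ext x
        simp only [Finset.mem_filter, Finset.mem_range]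
        omega
      · intros; rfl
    rw [e1, ← e2]
    have : ∑ i : Fin s, n i.succ = ∑ i, Fin.tail n i := rfl
    rw [this]



private lemma sum_update_add {s : ℕ} (k : Fin s → ℕ) (j : Fin s) (b : ℕ) :
    (∑ i, Function.update k j b i) + k j = (∑ i, k i) + b := by
  rw [Finset.sum_update_of_mem (Finset.mem_univ j)]
  have h2 := Finset.sum_eq_sum_sdiff_singleton_add (Finset.mem_univ j) k
  omega

private lemma prod_choose_split {s : ℕ} (u v : Fin s → ℕ) (j : Fin s) :
    ∏ i, (u i).choose (v i)
      = (u j).choose (v j) * ∏ i ∈ Finset.univ \ {j}, (u i).choose (v i) := by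
  rw [Finset.prod_eq_prod_diff_singleton_mul (Finset.mem_univ j), mul_comm]

private lemma shift {s : ℕ} (n : Fin s → ℕ) (m : ℕ) (j : Fin s) (hm : 1 ≤ m)
    (f : (Fin s → ℕ) → ℕ) :
    ∑ k ∈ Finset.filter (fun k : Fin s → ℕ => ∑ i, k i = m)
        (Fintype.piFinset fun i => Finset.range (n i + 1)),
      (∏ i, (n i).choose (k i)) * (k j * f k)
    = n j * ∑ k ∈ Finset.filter (fun k : Fin s → ℕ => ∑ i, k i = m - 1)
        (Fintype.piFinset fun i => Finset.range (Function.update n j (n j - 1) i + 1)),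
      (∏ i, (Function.update n j (n j - 1) i).choose (k i)) * f (Function.update k j (k j + 1)) := by
  by_cases hnj : n j = 0
  · rw [hnj, zero_mul]
    refine Finset.sum_eq_zero fun k hk => ?_
    simp only [Finset.mem_filter, Fintype.mem_piFinset, Finset.mem_range] at hk
    have := hk.1 j
    rw [hnj] at this
    have hkj : k j = 0 := by omega
    rw [hkj, zero_mul, mul_zero]
  · have hnj' : 1 ≤ n j := Nat.one_le_iff_ne_zero.2 hnj
    rw [Finset.mul_sum]
    rw [← Finset.sum_filter_of_ne (p := fun k : Fin s → ℕ => k j ≠ 0)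
      (fun k _ h => by
        intro h0
        apply h
        rw [h0, zero_mul, mul_zero])]
    refine Finset.sum_nbij' (fun k => Function.update k j (k j - 1))
      (fun k => Function.update k j (k j + 1)) ?_ ?_ ?_ ?_ ?_
    · intro k hk
      simp only [Finset.mem_filter, Fintype.mem_piFinset, Finset.mem_range] at hk ⊢
      obtain ⟨⟨h1, h2⟩, h3⟩ := hk
      refine ⟨fun i => ?_, ?_⟩
      · by_cases hij : i = j
        · subst hij
          rw [Function.update_self, Function.update_self]
          have := h1 i
          omega
        · rw [Function.update_of_ne hij, Function.update_of_ne hij]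
          exact h1 i
      · have := sum_update_add k j (k j - 1)
        omega
    · intro k hk
      simp only [Finset.mem_filter, Fintype.mem_piFinset, Finset.mem_range] at hk ⊢
      obtain ⟨h1, h2⟩ := hk
      refine ⟨⟨fun i => ?_, ?_⟩, ?_⟩
      · by_cases hij : i = j
        · subst hij
          rw [Function.update_self]
          have := h1 i
          rw [Function.update_self] at this
          omega
        · rw [Function.update_of_ne hij]
          have := h1 i
          rw [Function.update_of_ne hij] at this
          exact this
      · have := sum_update_add k j (k j + 1)
        omega
      · rw [Function.update_self]
        omega
    · intro k hk
      simp only [Finset.mem_filter] at hk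
      have hkj : k j ≠ 0 := hk.2
      funext i
      by_cases hij : i = j
      · subst hij
        simp only [Function.update_apply]
        simp only [if_pos trivial] <;> try simp
        omega
      · simp [Function.update_apply, hij]
    · intro k _
      funext i
      by_cases hij : i = j
      · subst hij
        simp [Function.update_apply]
      · simp [Function.update_apply, hij]
    · intro k hk
      simp only [Finset.mem_filter, Fintype.mem_piFinset, Finset.mem_range] at hk
      obtain ⟨⟨h1, h2⟩, h3⟩ := hk
      have hkj : 1 ≤ k j := Nat.one_le_iff_ne_zero.2 h3
      have harg : Function.update (Function.update k j (k j - 1)) j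
          (Function.update k j (k j - 1) j + 1) = k := by
        funext i
        by_cases hij : i = j
        · subst hij
          rw [Function.update_self, Function.update_self]
          omega
        · rw [Function.update_of_ne hij, Function.update_of_ne hij]
      rw [harg]
      rw [prod_choose_split n k, prod_choose_split (Function.update n j (n j - 1))
        (Function.update k j (k j - 1))]
      have hprod : ∏ i ∈ Finset.univ \ {j}, (n i).choose (k i)
          = ∏ i ∈ Finset.univ \ {j},
            (Function.update n j (n j - 1) i).choose (Function.update k j (k j - 1) i) := by
        refine Finset.prod_congr rfl fun i hi => ?_
        simp only [Finset.mem_sdiff, Finset.mem_singleton] at hi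
        rw [Function.update_of_ne hi.2, Function.update_of_ne hi.2]
      rw [← hprod, Function.update_self, Function.update_self]
      have hkey : (n j).choose (k j) * k j = n j * (n j - 1).choose (k j - 1) := by
        obtain ⟨a, ha⟩ : ∃ a, n j = a + 1 := ⟨n j - 1, by omega⟩
        obtain ⟨b, hb⟩ : ∃ b, k j = b + 1 := ⟨k j - 1, by omega⟩
        rw [ha, hb]
        simp only [Nat.add_sub_cancel]
        rw [← Nat.add_one_mul_choose_eq]
      calc (n j).choose (k j) * (∏ i ∈ Finset.univ \ {j}, (n i).choose (k i)) * (k j * f k)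
          = ((n j).choose (k j) * k j) *
            ((∏ i ∈ Finset.univ \ {j}, (n i).choose (k i)) * f k) := by ring
        _ = n j * ((n j - 1).choose (k j - 1) *
            (∏ i ∈ Finset.univ \ {j}, (n i).choose (k i)) * f k) := by rw [hkey]; ring

private lemma sum_update_sub {s : ℕ} (n : Fin s → ℕ) (j : Fin s) (h : 1 ≤ n j) :
    ∑ i, Function.update n j (n j - 1) i = (∑ i, n i) - 1 := by
  have h1 := sum_update_add n j (n j - 1)
  have h2 := Finset.sum_eq_sum_sdiff_singleton_add (Finset.mem_univ j) n
  have h3 : ∀ x ∈ Finset.univ \ {j}, 0 ≤ n x := fun x _ => Nat.zero_le _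
  have h4 : n j ≤ ∑ i, n i := by
    rw [h2]; omega
  omega

private lemma key {s : ℕ} (n : Fin s → ℕ) (hn : ∀ l, 1 ≤ n l) (hS : 2 ≤ ∑ l, n l)
    (m : ℕ) (hm : 2 ≤ m) (i j : Fin s) :
    ∑ k ∈ Finset.filter (fun k : Fin s → ℕ => ∑ i, k i = m)
        (Fintype.piFinset fun i => Finset.range (n i + 1)),
      (∏ l, (n l).choose (k l)) * (k i * k j)
      = n i * n j * ((∑ l, n l) - 2).choose (m - 2)
        + if i = j then n i * ((∑ l, n l) - 2).choose (m - 1) else 0 := by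
  have hm1 : 1 ≤ m := by omega
  have hm2 : 1 ≤ m - 1 := by omega
  have hsub : m - 1 - 1 = m - 2 := by omega
  have hsub2 : (∑ l, n l) - 1 - 1 = (∑ l, n l) - 2 := by omega
  have hS1 : (∑ l, n l) - 1 = ((∑ l, n l) - 2) + 1 := by omega
  have hm1' : m - 1 = (m - 2) + 1 := by omega
  by_cases hij : i = j
  · subst hij
    rw [if_pos rfl]
    have hsplit : ∀ k : Fin s → ℕ, (∏ l, (n l).choose (k l)) * (k i * k i)
        = (∏ l, (n l).choose (k l)) * (k i * (k i - 1))
          + (∏ l, (n l).choose (k l)) * (k i * 1) := by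
      intro k
      have : k i * (k i - 1) + k i * 1 = k i * k i := by
        rcases Nat.eq_zero_or_pos (k i) with h|h
        · simp [h]
        · obtain ⟨b, hb⟩ : ∃ b, k i = b + 1 := ⟨k i - 1, by omega⟩
          rw [hb]
          simp only [Nat.add_sub_cancel]
          ring
      rw [← Nat.mul_add, this]
    rw [Finset.sum_congr rfl fun k _ => hsplit k, Finset.sum_add_distrib]
    have hB : ∑ k ∈ Finset.filter (fun k : Fin s → ℕ => ∑ i, k i = m)
        (Fintype.piFinset fun i => Finset.range (n i + 1)),
        (∏ l, (n l).choose (k l)) * (k i * 1)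
        = n i * ((∑ l, n l) - 1).choose (m - 1) := by
      have h := shift n m i hm1 (fun _ => 1)
      simp only [mul_one] at h ⊢
      rw [h, vandermonde, sum_update_sub n i (hn i)]
    have hA : ∑ k ∈ Finset.filter (fun k : Fin s → ℕ => ∑ i, k i = m)
        (Fintype.piFinset fun i => Finset.range (n i + 1)),
        (∏ l, (n l).choose (k l)) * (k i * (k i - 1))
        = n i * (n i - 1) * ((∑ l, n l) - 2).choose (m - 2) := by
      have h := shift n m i hm1 (fun k => k i - 1)
      simp only [Function.update_self, Nat.add_sub_cancel] at h
      rw [h]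
      clear h
      by_cases hni : n i = 1
      · have e0 : n i - 1 = 0 := by rw [hni]
        rw [e0, mul_zero, zero_mul]
        refine mul_eq_zero_of_right _ (Finset.sum_eq_zero fun k hk => ?_)
        simp only [Finset.mem_filter, Fintype.mem_piFinset, Finset.mem_range] at hk
        have hki := hk.1 i
        simp only [Function.update_self, hni] at hki
        have : k i = 0 := Nat.lt_one_iff.mp (by simpa using hki)
        rw [this, mul_zero]
      · have hni2 : 1 ≤ n i - 1 := Nat.le_sub_one_of_lt (lt_of_le_of_ne (hn i) (Ne.symm hni))
        have h4 : (1:ℕ) ≤ Function.update n i (n i - 1) i := by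
          rw [Function.update_self]; exact hni2
        have h3 := shift (Function.update n i (n i - 1)) (m - 1) i hm2 (fun _ => 1)
        simp only [mul_one] at h3
        rw [h3, vandermonde, sum_update_sub _ i h4, sum_update_sub n i (hn i),
          Function.update_self, hsub, hsub2, mul_assoc]
    rw [hA, hB]
    clear hA hB hsplit
    rw [hS1, hm1', Nat.choose_succ_succ]
    obtain ⟨a, ha⟩ : ∃ a, n i = a + 1 := ⟨n i - 1, by have := hn i; omega⟩
    rw [ha]
    simp only [Nat.add_sub_cancel]
    ring
  · rw [if_neg hij]
    have hc : ∀ k : Fin s → ℕ, (∏ l, (n l).choose (k l)) * (k i * k j)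
        = (∏ l, (n l).choose (k l)) * (k j * k i) := by intro k; ring
    rw [Finset.sum_congr rfl fun k _ => hc k]
    have h := shift n m j hm1 (fun k => k i)
    simp only [Function.update_of_ne hij] at h
    rw [h]
    clear h
    have h4 : (1:ℕ) ≤ Function.update n j (n j - 1) i := by
      rw [Function.update_of_ne hij]; exact hn i
    have h3 := shift (Function.update n j (n j - 1)) (m - 1) i hm2 (fun _ => 1)
    simp only [mul_one] at h3
    rw [h3, vandermonde, sum_update_sub _ i h4, sum_update_sub n j (hn j),
      Function.update_of_ne hij, hsub, hsub2, add_zero]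
    ring

theorem stmt_18 {𝕂 : Type*} [RCLike 𝕂] (N : ℕ) (hN : 1 ≤ N)
    (s : ℕ) (hs : 2 ≤ s) (n : Fin s → ℕ) (hn : ∀ i, 1 ≤ n i)
    (A : Fin s → Matrix (Fin N) (Fin N) 𝕂)
    (m : ℕ) (hm : 2 ≤ m) (hmn : m ≤ ∑ i, n i) :
    ∑ k ∈ Finset.filter (fun k : Fin s → ℕ => ∑ i, k i = m)
        (Fintype.piFinset fun i => Finset.range (n i + 1)),
      (∏ i, ((n i).choose (k i) : 𝕂)) •
        ((∑ i, (k i : 𝕂) • A i) * (∑ i, (k i : 𝕂) • A i))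
      = ((((∑ i, n i) - 2).choose (m - 1) : ℕ) : 𝕂) • (∑ i, (n i : 𝕂) • (A i * A i))
        + ((((∑ i, n i) - 2).choose (m - 2) : ℕ) : 𝕂) •
            ((∑ i, (n i : 𝕂) • A i) * (∑ i, (n i : 𝕂) • A i)) := by
  classical
  have hS : 2 ≤ ∑ l, n l := by
    have h1 : ∑ _i : Fin s, 1 ≤ ∑ i, n i := Finset.sum_le_sum fun i _ => hn i
    simp only [Finset.sum_const, Finset.card_univ, Fintype.card_fin, smul_eq_mul, mul_one] at h1
    omega
  have hexp : ∀ (b : Fin s → ℕ),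
      (∑ i, ((b i : 𝕂)) • A i) * (∑ i, (b i : 𝕂) • A i)
        = ∑ i, ∑ j, ((b i * b j : ℕ) : 𝕂) • (A i * A j) := by
    intro b
    rw [Finset.sum_mul_sum]
    refine Finset.sum_congr rfl fun i _ => Finset.sum_congr rfl fun j _ => ?_
    rw [smul_mul_smul_comm, Nat.cast_mul]
  calc ∑ k ∈ Finset.filter (fun k : Fin s → ℕ => ∑ i, k i = m)
        (Fintype.piFinset fun i => Finset.range (n i + 1)),
      (∏ i, ((n i).choose (k i) : 𝕂)) •
        ((∑ i, (k i : 𝕂) • A i) * (∑ i, (k i : 𝕂) • A i))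
      = ∑ k ∈ Finset.filter (fun k : Fin s → ℕ => ∑ i, k i = m)
          (Fintype.piFinset fun i => Finset.range (n i + 1)),
        ∑ i, ∑ j, (((∏ l, (n l).choose (k l)) * (k i * k j) : ℕ) : 𝕂) • (A i * A j) := by
        refine Finset.sum_congr rfl fun k _ => ?_
        rw [hexp k, Finset.smul_sum]
        refine Finset.sum_congr rfl fun i _ => ?_
        rw [Finset.smul_sum]
        refine Finset.sum_congr rfl fun j _ => ?_
        rw [smul_smul]
        congr 1
        push_cast
        ring
    _ = ∑ i, ∑ j, (((∑ k ∈ Finset.filter (fun k : Fin s → ℕ => ∑ i, k i = m)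
          (Fintype.piFinset fun i => Finset.range (n i + 1)),
          (∏ l, (n l).choose (k l)) * (k i * k j)) : ℕ) : 𝕂) • (A i * A j) := by
        rw [Finset.sum_comm]
        refine Finset.sum_congr rfl fun i _ => ?_
        rw [Finset.sum_comm]
        refine Finset.sum_congr rfl fun j _ => ?_
        rw [Nat.cast_sum, Finset.sum_smul]
    _ = ∑ i, ∑ j, ((n i * n j * ((∑ l, n l) - 2).choose (m - 2)
          + if i = j then n i * ((∑ l, n l) - 2).choose (m - 1) else 0 : ℕ) : 𝕂) • (A i * A j) := by
        refine Finset.sum_congr rfl fun i _ => Finset.sum_congr rfl fun j _ => ?_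
        rw [key n hn hS m hm i j]
    _ = ((((∑ l, n l) - 2).choose (m - 1) : ℕ) : 𝕂) • (∑ i, (n i : 𝕂) • (A i * A i))
        + ((((∑ l, n l) - 2).choose (m - 2) : ℕ) : 𝕂) •
          (∑ i, ∑ j, ((n i * n j : ℕ) : 𝕂) • (A i * A j)) := by
        rw [Finset.smul_sum, Finset.smul_sum, ← Finset.sum_add_distrib]
        refine Finset.sum_congr rfl fun i _ => ?_
        have h1 : ((((∑ l, n l) - 2).choose (m - 1) : ℕ) : 𝕂) • ((n i : 𝕂) • (A i * A i))
            = ∑ j, if i = j then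
              ((((∑ l, n l) - 2).choose (m - 1) : ℕ) : 𝕂) • ((n i : 𝕂) • (A i * A i)) else 0 := by
          rw [Finset.sum_ite_eq]
          simp
        rw [h1, Finset.smul_sum, ← Finset.sum_add_distrib]
        refine Finset.sum_congr rfl fun j _ => ?_
        by_cases hij : i = j
        · subst hij
          rw [if_pos rfl, if_pos rfl, smul_smul, smul_smul, ← add_smul]
          congr 1
          push_cast
          ring
        · rw [if_neg hij, if_neg hij, zero_add, add_zero, smul_smul]
          congr 1
          push_cast
          ring
    _ = ((((∑ i, n i) - 2).choose (m - 1) : ℕ) : 𝕂) • (∑ i, (n i : 𝕂) • (A i * A i))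
        + ((((∑ i, n i) - 2).choose (m - 2) : ℕ) : 𝕂) •
            ((∑ i, (n i : 𝕂) • A i) * (∑ i, (n i : 𝕂) • A i)) := by
        rw [hexp n]
end

section
/- Let 𝕂 be ℝ or ℂ and let M, N ≥ 1. Let s ≥ 2, let n_1, …, n_s be positive integers, let A_1, …, A_s be M×N matrices over 𝕂, and let m be a positive integer with 2 ≤ m ≤ ∑_{i=1}^s n_i. Then ∑ C(n_1,k_1)·C(n_2,k_2)···C(n_s,k_s)·(∑_{i=1}^s k_i A_i)·(∑_{i=1}^s k_i A_i)* = C(∑_{i=1}^s n_i − 2, m−1)·∑_{i=1}^s n_i A_i A_i* + C(∑_{i=1}^s n_i − 2, m−2)·(∑_{i=1}^s n_i A_i)·(∑_{i=1}^s n_i A_i)*, where the outer sum ranges over all s-tuples (k_1, …, k_s) of nonnegative integers with k_i ≤ n_i for each i and ∑_{i=1}^s k_i = m, and the equality is between M×M matrices. -/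
open Polynomial


lemma finsupp_to_pi {ι : Type*} [DecidableEq ι] (s : Finset ι) (m : ℕ) (h : (ι → ℕ) → ℕ) :
    ∑ l ∈ Finset.finsuppAntidiag s m, h ⇑l = ∑ f ∈ s.piAntidiag m, h f := by
  rw [Finset.finsuppAntidiag, Finset.sum_map]
  simpa using Finset.sum_attach _ (fun f => h f)

lemma master {s : ℕ} (n : Fin s → ℕ) (m : ℕ) (g : Fin s → Polynomial ℕ)
    (hg : ∀ i k, n i < k → (g i).coeff k = 0) :
    ∑ k ∈ Finset.filter (fun k : Fin s → ℕ => ∑ i, k i = m)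
        (Fintype.piFinset fun i => Finset.range (n i + 1)),
      ∏ i, (g i).coeff (k i) = (∏ i, g i).coeff m := by
  have h1 : (∏ i, g i).coeff m
      = ∑ l ∈ Finset.finsuppAntidiag Finset.univ m, ∏ i, (g i).coeff (l i) := by
    rw [← Polynomial.coeff_coe]
    rw [show ((∏ i, g i : Polynomial ℕ) : PowerSeries ℕ)
        = ∏ i, ((g i : Polynomial ℕ) : PowerSeries ℕ) by
      simp only [← Polynomial.coeToPowerSeries.ringHom_apply]
      exact map_prod _ _ _]
    rw [PowerSeries.coeff_prod]
    simp [Polynomial.coeff_coe]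
  rw [h1, finsupp_to_pi Finset.univ m (fun f => ∏ i, (g i).coeff (f i))]
  apply Finset.sum_subset
  · intro k hk
    simp only [Finset.mem_filter, Fintype.mem_piFinset, Finset.mem_range] at hk
    rw [Finset.mem_piAntidiag]
    exact ⟨hk.2, fun i _ => Finset.mem_univ i⟩
  · intro k hk hk'
    rw [Finset.mem_piAntidiag] at hk
    have : ∃ i, n i < k i := by
      by_contra hc; push_neg at hc
      exact hk' (by
        simp only [Finset.mem_filter, Fintype.mem_piFinset, Finset.mem_range]
        exact ⟨fun i => by have := hc i; omega, hk.1⟩)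
    obtain ⟨i, hi⟩ := this
    exact Finset.prod_eq_zero (Finset.mem_univ i) (hg i _ hi)

-- weighted choose identity
lemma wchoose (n k : ℕ) : (k + 1) * n.choose (k + 1) = n * (n - 1).choose k := by
  cases n with
  | zero => simp
  | succ n' =>
    simp only [Nat.succ_sub_one]
    rw [mul_comm]
    exact (Nat.add_one_mul_choose_eq n' k).symm

-- coeff of X * (X+1)^a
lemma coeff_X_mul_pow (a k : ℕ) :
    ((X : Polynomial ℕ) * (X + 1) ^ a).coeff k = if k = 0 then 0 else a.choose (k - 1) := by
  cases k with
  | zero => simp [Polynomial.mul_coeff_zero]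
  | succ k' => simp [Polynomial.coeff_X_mul, Polynomial.coeff_X_add_one_pow]

lemma coeff_X_sq_mul_pow (a k : ℕ) :
    ((X : Polynomial ℕ) * (X * (X + 1) ^ a)).coeff k
      = if k ≤ 1 then 0 else a.choose (k - 2) := by
  match k with
  | 0 => simp [Polynomial.mul_coeff_zero]
  | 1 => simp [Polynomial.coeff_X_mul, coeff_X_mul_pow]
  | (k'' + 2) => simp [Polynomial.coeff_X_mul, coeff_X_mul_pow, Polynomial.coeff_X_add_one_pow]

-- g i coeff identities
lemma coeff_single (ni : ℕ) (hni : 1 ≤ ni) (k : ℕ) :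
    ((ni • ((X : Polynomial ℕ) * (X + 1) ^ (ni - 1)))).coeff k = ni.choose k * k := by
  rw [Polynomial.coeff_smul, coeff_X_mul_pow]
  cases k with
  | zero => simp
  | succ k' =>
    simp only [Nat.succ_ne_zero, if_false, Nat.succ_sub_one, smul_eq_mul]
    rw [mul_comm (ni.choose (k'+1)), wchoose]

lemma coeff_double (ni : ℕ) (hni : 1 ≤ ni) (k : ℕ) :
    (ni • ((X : Polynomial ℕ) * (X + 1) ^ (ni - 1))
      + (ni * (ni - 1)) • ((X : Polynomial ℕ) * (X * (X + 1) ^ (ni - 2)))).coeff k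
      = ni.choose k * k * k := by
  rw [Polynomial.coeff_add, Polynomial.coeff_smul, Polynomial.coeff_smul,
    coeff_X_mul_pow, coeff_X_sq_mul_pow]
  match k with
  | 0 => simp
  | 1 => simp
  | (k'' + 2) =>
    simp only [smul_eq_mul, if_neg (by omega : ¬ (k''+2 = 0)), if_neg (by omega : ¬ (k''+2 ≤ 1))]
    have h2 : (k'' + 1) * (ni - 1).choose (k'' + 1) = (ni - 1) * (ni - 2).choose k'' := by
      have := wchoose (ni - 1) k''
      rwa [show ni - 1 - 1 = ni - 2 by omega] at this
    have key : ni.choose (k''+2) * (k''+2) * (k''+2)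
        = ni * (ni - 1).choose (k''+1) + ni * (ni-1) * (ni-2).choose k'' := by
      calc ni.choose (k''+2) * (k''+2) * (k''+2)
          = ((k''+2) * ni.choose (k''+2)) * ((k''+1) + 1) := by ring
        _ = (ni * (ni-1).choose (k''+1)) * ((k''+1) + 1) := by rw [wchoose ni (k''+1)]
        _ = ni * ((k''+1) * (ni-1).choose (k''+1)) + ni * (ni-1).choose (k''+1) := by ring
        _ = ni * ((ni-1) * (ni-2).choose k'') + ni * (ni-1).choose (k''+1) := by rw [h2]
        _ = ni * (ni-1).choose (k''+1) + ni * (ni-1) * (ni-2).choose k'' := by ring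
    rw [show k'' + 2 - 1 = k'' + 1 by omega, show k'' + 2 - 2 = k'' by omega]
    omega
section
variable {s : ℕ}

lemma keyEq (n : Fin s → ℕ) (hn : ∀ l, 1 ≤ n l) (m : ℕ) (hm : 2 ≤ m)
    (hmn : m ≤ ∑ l, n l) (i : Fin s) :
    ∑ k ∈ Finset.filter (fun k : Fin s → ℕ => ∑ l, k l = m)
        (Fintype.piFinset fun l => Finset.range (n l + 1)),
      (∏ l, (n l).choose (k l)) * (k i * k i)
    = n i * ((∑ l, n l) - 1).choose (m - 1)
      + n i * (n i - 1) * ((∑ l, n l) - 2).choose (m - 2) := by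
  classical
  set N := ∑ l, n l with hN
  have hNi : n i ≤ N := Finset.single_le_sum (fun l _ => Nat.zero_le (n l)) (Finset.mem_univ i)
  have hN2 : 2 ≤ N := le_trans hm hmn
  set g : Fin s → Polynomial ℕ := fun l =>
    if l = i then (n i) • ((X:Polynomial ℕ)*(X+1)^(n i - 1))
        + (n i * (n i - 1)) • ((X:Polynomial ℕ)*((X:Polynomial ℕ)*(X+1)^(n i - 2)))
      else (X+1)^(n l) with hgdef
  have egi : g i = (n i) • ((X:Polynomial ℕ)*(X+1)^(n i - 1))
      + (n i * (n i - 1)) • ((X:Polynomial ℕ)*((X:Polynomial ℕ)*(X+1)^(n i - 2))) := by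
    simp [hgdef]
  have egl : ∀ l, l ≠ i → g l = (X+1)^(n l) := fun l hl => by simp [hgdef, hl]
  have hco : ∀ l k, (g l).coeff k = (n l).choose k * (if l = i then k * k else 1) := by
    intro l k
    by_cases h : l = i
    · subst h
      rw [egi, coeff_double (n l) (hn l) k, if_pos rfl]
      ring
    · rw [egl l h, if_neg h, Polynomial.coeff_X_add_one_pow]
      simp
  have hg : ∀ l k, n l < k → (g l).coeff k = 0 := by
    intro l k hk; rw [hco]; simp [Nat.choose_eq_zero_of_lt hk]
  have hsum : ∀ k : Fin s → ℕ,
      ∏ l, (g l).coeff (k l) = (∏ l, (n l).choose (k l)) * (k i * k i) := by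
    intro k
    simp only [hco]
    rw [Finset.prod_mul_distrib]
    congr 1
    simp [Finset.prod_ite_eq' Finset.univ i (fun l => k l * k l)]
  have hsplit : n i + ∑ l ∈ Finset.univ.erase i, n l = N :=
    Finset.add_sum_erase Finset.univ n (Finset.mem_univ i)
  have hprod : ∏ l, g l = (n i) • ((X:Polynomial ℕ)*(X+1)^(N-1))
      + (n i * (n i - 1)) • ((X:Polynomial ℕ)*((X:Polynomial ℕ)*(X+1)^(N-2))) := by
    rw [← Finset.mul_prod_erase Finset.univ g (Finset.mem_univ i)]
    have h1 : ∏ l ∈ Finset.univ.erase i, g l = ∏ l ∈ Finset.univ.erase i, (X+1)^(n l) :=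
      Finset.prod_congr rfl (fun l hl => egl l (Finset.mem_erase.1 hl).1)
    have h2 : ∏ l ∈ Finset.univ.erase i, ((X:Polynomial ℕ)+1)^(n l) = ((X:Polynomial ℕ)+1)^(N - n i) := by
      rw [Finset.prod_pow_eq_pow_sum]
      congr 1
      omega
    rw [h1, h2, egi]
    have hexp : ((X:Polynomial ℕ)+1)^(n i - 1) * ((X:Polynomial ℕ)+1)^(N - n i)
        = ((X:Polynomial ℕ)+1)^(N-1) := by
      rw [← pow_add]; congr 1; have := hn i; omega
    have hexp2 : (n i * (n i - 1)) • ((X:Polynomial ℕ)*((X:Polynomial ℕ)*(((X:Polynomial ℕ)+1)^(n i - 2) * ((X:Polynomial ℕ)+1)^(N - n i))))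
        = (n i * (n i - 1)) • ((X:Polynomial ℕ)*((X:Polynomial ℕ)*((X:Polynomial ℕ)+1)^(N-2))) := by
      rcases Nat.lt_or_ge (n i) 2 with h2 | h2
      · have : n i = 1 := by have := hn i; omega
        simp [this]
      · rw [← pow_add]
        congr 4
        omega
    rw [add_mul, smul_mul_assoc, smul_mul_assoc]
    congr 1
    · congr 1
      rw [mul_assoc, hexp]
    · rw [show (X:Polynomial ℕ)*((X:Polynomial ℕ)*((X:Polynomial ℕ)+1)^(n i - 2)) * ((X:Polynomial ℕ)+1)^(N - n i)
          = (X:Polynomial ℕ)*((X:Polynomial ℕ)*(((X:Polynomial ℕ)+1)^(n i - 2) * ((X:Polynomial ℕ)+1)^(N - n i))) from by ring]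
      exact hexp2
  rw [Finset.sum_congr rfl (fun k _ => (hsum k).symm), master n m g hg, hprod]
  rw [Polynomial.coeff_add, Polynomial.coeff_smul, Polynomial.coeff_smul,
    coeff_X_mul_pow, coeff_X_sq_mul_pow]
  rw [if_neg (show ¬ m = 0 by omega), if_neg (show ¬ m ≤ 1 by omega)]
  simp

end
lemma keyNe {s : ℕ} (n : Fin s → ℕ) (hn : ∀ l, 1 ≤ n l) (m : ℕ) (hm : 2 ≤ m)
    (hmn : m ≤ ∑ l, n l) (i j : Fin s) (hij : i ≠ j) :
    ∑ k ∈ Finset.filter (fun k : Fin s → ℕ => ∑ l, k l = m)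
        (Fintype.piFinset fun l => Finset.range (n l + 1)),
      (∏ l, (n l).choose (k l)) * (k i * k j)
    = n i * n j * ((∑ l, n l) - 2).choose (m - 2) := by
  classical
  set N := ∑ l, n l with hN
  have hN2 : 2 ≤ N := le_trans hm hmn
  have hjmem : j ∈ Finset.univ.erase i := Finset.mem_erase.2 ⟨Ne.symm hij, Finset.mem_univ j⟩
  have hsplit : n i + ∑ l ∈ Finset.univ.erase i, n l = N :=
    Finset.add_sum_erase Finset.univ n (Finset.mem_univ i)
  have hsplit2 : n j + ∑ l ∈ (Finset.univ.erase i).erase j, n l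
      = ∑ l ∈ Finset.univ.erase i, n l :=
    Finset.add_sum_erase _ n hjmem
  set g : Fin s → Polynomial ℕ := fun l =>
    if l = i then (n i) • ((X:Polynomial ℕ)*(X+1)^(n i - 1))
    else if l = j then (n j) • ((X:Polynomial ℕ)*(X+1)^(n j - 1))
    else (X+1)^(n l) with hgdef
  have egi : g i = (n i) • ((X:Polynomial ℕ)*(X+1)^(n i - 1)) := by simp [hgdef]
  have egj : g j = (n j) • ((X:Polynomial ℕ)*(X+1)^(n j - 1)) := by
    simp [hgdef, Ne.symm hij]
  have egl : ∀ l, l ≠ i → l ≠ j → g l = (X+1)^(n l) := fun l h h' => by simp [hgdef, h, h']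
  have hco : ∀ l k, (g l).coeff k
      = (n l).choose k * ((if l = i then k else 1) * (if l = j then k else 1)) := by
    intro l k
    by_cases h : l = i
    · subst h
      rw [egi, coeff_single (n l) (hn l) k, if_pos rfl, if_neg hij]
      ring
    · by_cases h' : l = j
      · subst h'
        rw [egj, coeff_single (n l) (hn l) k, if_neg h, if_pos rfl]
        ring
      · rw [egl l h h', if_neg h, if_neg h', Polynomial.coeff_X_add_one_pow]
        simp
  have hg : ∀ l k, n l < k → (g l).coeff k = 0 := by
    intro l k hk; rw [hco]; simp [Nat.choose_eq_zero_of_lt hk]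
  have hsum : ∀ k : Fin s → ℕ,
      ∏ l, (g l).coeff (k l) = (∏ l, (n l).choose (k l)) * (k i * k j) := by
    intro k
    simp only [hco]
    rw [Finset.prod_mul_distrib, Finset.prod_mul_distrib]
    simp [Finset.prod_ite_eq' Finset.univ i (fun l => k l),
      Finset.prod_ite_eq' Finset.univ j (fun l => k l), mul_assoc]
  have hprod : ∏ l, g l
      = (n i * n j) • ((X:Polynomial ℕ)*((X:Polynomial ℕ)*(X+1)^(N-2))) := by
    rw [← Finset.mul_prod_erase Finset.univ g (Finset.mem_univ i),
      ← Finset.mul_prod_erase (Finset.univ.erase i) g hjmem]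
    have h1 : ∏ l ∈ (Finset.univ.erase i).erase j, g l
        = ∏ l ∈ (Finset.univ.erase i).erase j, (X+1)^(n l) :=
      Finset.prod_congr rfl (fun l hl => egl l
        (Finset.mem_erase.1 (Finset.mem_erase.1 hl).2).1 (Finset.mem_erase.1 hl).1)
    have h2 : ∏ l ∈ (Finset.univ.erase i).erase j, ((X:Polynomial ℕ)+1)^(n l)
        = ((X:Polynomial ℕ)+1)^(N - n i - n j) := by
      rw [Finset.prod_pow_eq_pow_sum]
      congr 1
      omega
    rw [h1, h2, egi, egj]
    have hexp : ((X:Polynomial ℕ)+1)^(n i - 1) * (((X:Polynomial ℕ)+1)^(n j - 1)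
        * ((X:Polynomial ℕ)+1)^(N - n i - n j)) = ((X:Polynomial ℕ)+1)^(N-2) := by
      rw [← pow_add, ← pow_add]; congr 1
      have := hn i; have := hn j; omega
    rw [smul_mul_assoc (n j), mul_smul_comm (n j), smul_mul_assoc (n i), smul_smul, mul_comm (n j) (n i)]
    congr 1
    rw [show (X:Polynomial ℕ)*((X:Polynomial ℕ)+1)^(n i - 1)
          * ((X:Polynomial ℕ)*((X:Polynomial ℕ)+1)^(n j - 1) * ((X:Polynomial ℕ)+1)^(N - n i - n j))
        = (X:Polynomial ℕ)*((X:Polynomial ℕ)*(((X:Polynomial ℕ)+1)^(n i - 1)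
          * (((X:Polynomial ℕ)+1)^(n j - 1) * ((X:Polynomial ℕ)+1)^(N - n i - n j)))) from by ring,
      hexp]
  rw [Finset.sum_congr rfl (fun k _ => (hsum k).symm), master n m g hg, hprod]
  rw [Polynomial.coeff_smul, coeff_X_sq_mul_pow, if_neg (show ¬ m ≤ 1 by omega)]
  simp
open Matrix

theorem stmt_19 {𝕂 : Type*} [RCLike 𝕂] (M N : ℕ) (hM : 1 ≤ M) (hN : 1 ≤ N)
    (s : ℕ) (hs : 2 ≤ s) (n : Fin s → ℕ) (hn : ∀ i, 1 ≤ n i)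
    (A : Fin s → Matrix (Fin M) (Fin N) 𝕂)
    (m : ℕ) (hm : 2 ≤ m) (hmn : m ≤ ∑ i, n i) :
    ∑ k ∈ Finset.filter (fun k : Fin s → ℕ => ∑ i, k i = m)
        (Fintype.piFinset fun i => Finset.range (n i + 1)),
      (∏ i, ((n i).choose (k i) : 𝕂)) •
        ((∑ i, (k i : 𝕂) • A i) * (∑ i, (k i : 𝕂) • A i)ᴴ)
      = ((((∑ i, n i) - 2).choose (m - 1) : ℕ) : 𝕂) • (∑ i, (n i : 𝕂) • (A i * (A i)ᴴ))
        + ((((∑ i, n i) - 2).choose (m - 2) : ℕ) : 𝕂) •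
            ((∑ i, (n i : 𝕂) • A i) * (∑ i, (n i : 𝕂) • A i)ᴴ) := by
  classical
  set F := Finset.filter (fun k : Fin s → ℕ => ∑ i, k i = m)
      (Fintype.piFinset fun i => Finset.range (n i + 1)) with hF
  have expand : ∀ c : Fin s → ℕ,
      ((∑ i, (c i : 𝕂) • A i) * (∑ i, (c i : 𝕂) • A i)ᴴ)
        = ∑ i, ∑ j, ((c i * c j : ℕ) : 𝕂) • (A i * (A j)ᴴ) := by
    intro c
    rw [Matrix.conjTranspose_sum, Matrix.sum_mul]
    refine Finset.sum_congr rfl fun i _ => ?_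
    rw [Matrix.mul_sum]
    refine Finset.sum_congr rfl fun j _ => ?_
    rw [Matrix.conjTranspose_smul, Matrix.smul_mul, Matrix.mul_smul, smul_smul]
    congr 1
    push_cast
    rw [star_natCast]
  have lhs_eq : ∑ k ∈ F, (∏ i, ((n i).choose (k i) : 𝕂)) •
        ((∑ i, (k i : 𝕂) • A i) * (∑ i, (k i : 𝕂) • A i)ᴴ)
      = ∑ i, ∑ j,
          (((∑ k ∈ F, (∏ l, (n l).choose (k l)) * (k i * k j) : ℕ)) : 𝕂) •
            (A i * (A j)ᴴ) := by
    calc ∑ k ∈ F, (∏ i, ((n i).choose (k i) : 𝕂)) •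
          ((∑ i, (k i : 𝕂) • A i) * (∑ i, (k i : 𝕂) • A i)ᴴ)
        = ∑ k ∈ F, ∑ i, ∑ j,
            (((∏ l, (n l).choose (k l)) * (k i * k j) : ℕ) : 𝕂) • (A i * (A j)ᴴ) := by
          refine Finset.sum_congr rfl fun k _ => ?_
          rw [expand k, Finset.smul_sum]
          refine Finset.sum_congr rfl fun i _ => ?_
          rw [Finset.smul_sum]
          refine Finset.sum_congr rfl fun j _ => ?_
          rw [smul_smul]
          congr 1
          push_cast
          ring
      _ = _ := by
          rw [Finset.sum_comm]
          refine Finset.sum_congr rfl fun i _ => ?_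
          rw [Finset.sum_comm]
          refine Finset.sum_congr rfl fun j _ => ?_
          rw [← Finset.sum_smul]
          congr 1
          push_cast
          rfl
  rw [lhs_eq]
  have diag : (((((∑ i, n i) - 2).choose (m - 1) : ℕ)) : 𝕂) • (∑ i, (n i : 𝕂) • (A i * (A i)ᴴ))
      = ∑ i, ∑ j, (if i = j then (((((∑ l, n l) - 2).choose (m - 1)) * n i : ℕ) : 𝕂) else 0) •
          (A i * (A j)ᴴ) := by
    rw [Finset.smul_sum]
    refine Finset.sum_congr rfl fun i _ => ?_
    rw [smul_smul]
    simp only [ite_smul, zero_smul, Finset.sum_ite_eq, Finset.mem_univ, if_true]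
    congr 1
    push_cast
    ring
  have offd : (((((∑ i, n i) - 2).choose (m - 2) : ℕ)) : 𝕂) •
        ((∑ i, (n i : 𝕂) • A i) * (∑ i, (n i : 𝕂) • A i)ᴴ)
      = ∑ i, ∑ j, (((((∑ l, n l) - 2).choose (m - 2)) * (n i * n j) : ℕ) : 𝕂) •
          (A i * (A j)ᴴ) := by
    rw [expand n, Finset.smul_sum]
    refine Finset.sum_congr rfl fun i _ => ?_
    rw [Finset.smul_sum]
    refine Finset.sum_congr rfl fun j _ => ?_
    rw [smul_smul]
    congr 1
    push_cast
    ring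
  rw [diag, offd, ← Finset.sum_add_distrib]
  refine Finset.sum_congr rfl fun i _ => ?_
  rw [← Finset.sum_add_distrib]
  refine Finset.sum_congr rfl fun j _ => ?_
  rw [← add_smul]
  congr 1
  have hN2 : 2 ≤ ∑ l, n l := le_trans hm hmn
  by_cases h : i = j
  · subst h
    rw [if_pos rfl, keyEq n hn m hm hmn i]
    have pas : ((∑ l, n l) - 1).choose (m - 1)
        = ((∑ l, n l) - 2).choose (m - 2) + ((∑ l, n l) - 2).choose (m - 1) := by
      rw [show (∑ l, n l) - 1 = ((∑ l, n l) - 2) + 1 by omega,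
        show m - 1 = (m - 2) + 1 by omega, Nat.choose_succ_succ]
    have natid : n i * ((∑ l, n l) - 1).choose (m - 1)
          + n i * (n i - 1) * ((∑ l, n l) - 2).choose (m - 2)
        = ((∑ l, n l) - 2).choose (m - 1) * n i
          + ((∑ l, n l) - 2).choose (m - 2) * (n i * n i) := by
      rw [pas]
      obtain ⟨t, ht⟩ : ∃ t, n i = t + 1 := ⟨n i - 1, by have := hn i; omega⟩
      rw [ht]
      simp only [Nat.add_sub_cancel]
      ring
    rw [natid]
    push_cast
    ring
  · rw [if_neg h, keyNe n hn m hm hmn i j h, zero_add]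
    push_cast
    ring
end
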